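/- arXiv:2605.20705 — 4 statements merged into one kernel-verified Lean document; each statement's English description precedes it below -/
import Mathlib

section
/- Let β and c, ρ be reals with 1/2 ≤ β < 1, c ≥ 0 and ρ ≥ 0. Then there exist reals s ≥ 1 and K > 0, depending only on β, c, ρ, such that for every real r ≥ s the following holds: if T : ℝ → ℝ is a function satisfying T(m) = 0 for all m ≤ r, and such that for every m > r there exist reals α₁, …, α₈ ∈ [0, 3/4 + c/√m] with 1 ≤ α₁ + ⋯ + α₈ ≤ 1 + c/√m and T(m) ≤ ρ·m^β + T(α₁·m) + ⋯ + T(α₈·m), then T(m) ≤ K·m / r^(1−β) for every m > 0. -/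
set_option maxHeartbeats 4000000 in
theorem recurrence_lemma (β c ρ : ℝ) (hβ₁ : 1/2 ≤ β) (hβ₂ : β < 1)
    (hc : 0 ≤ c) (hρ : 0 ≤ ρ) :
    ∃ s : ℝ, 1 ≤ s ∧ ∃ K : ℝ, 0 < K ∧
      ∀ r : ℝ, s ≤ r →
        ∀ T : ℝ → ℝ,
          (∀ m : ℝ, m ≤ r → T m = 0) →
          (∀ m : ℝ, r < m → ∃ α : Fin 8 → ℝ,
              (∀ i, 0 ≤ α i ∧ α i ≤ 3/4 + c / Real.sqrt m) ∧
              1 ≤ ∑ i, α i ∧ (∑ i, α i) ≤ 1 + c / Real.sqrt m ∧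
              T m ≤ ρ * m ^ β + ∑ i, T (α i * m)) →
          ∀ m : ℝ, 0 < m → T m ≤ K * m / r ^ (1 - β) := by
  have hq0 : (0:ℝ) < 1 - β := by linarith
  obtain ⟨δ, hδdef⟩ : ∃ x : ℝ, x = (16/13 : ℝ) ^ (1-β) - 1 := ⟨_, rfl⟩
  have hδ : 0 < δ := by
    have h : (1:ℝ) < (16/13 : ℝ) ^ (1-β) := by
      rw [Real.one_lt_rpow_iff_of_pos (by norm_num)]
      left; exact ⟨by norm_num, hq0⟩
    rw [hδdef]; linarith
  obtain ⟨A, hAdef⟩ : ∃ x : ℝ, x = 2*ρ + 8*ρ/(3*δ) + 1 := ⟨_, rfl⟩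
  have hdiv0 : 0 ≤ 8*ρ/(3*δ) := div_nonneg (by linarith) (by linarith)
  have hA0 : 0 < A := by rw [hAdef]; linarith
  have hA2ρ : 2*ρ ≤ A := by rw [hAdef]; linarith
  have hAρ3 : ρ ≤ 3*δ/8 * A := by
    have h1 : 3*δ/8 * (8*ρ/(3*δ)) = ρ := by field_simp
    have h2 : 0 ≤ 3*δ/8 * (2*ρ + 1) := by positivity
    calc ρ = 3*δ/8 * (8*ρ/(3*δ)) := h1.symm
    _ ≤ 3*δ/8 * A := by rw [hAdef]; nlinarith
  refine ⟨max 1 (max (256*c^2) (64*c^2/δ^2)), le_max_left _ _, A, hA0, ?_⟩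
  intro r hr T hT0 hrec
  have hr1 : (1:ℝ) ≤ r := le_trans (le_max_left _ _) hr
  have hr0 : (0:ℝ) < r := by linarith
  have hsr0 : 0 < Real.sqrt r := Real.sqrt_pos.2 hr0
  have hcr16 : c / Real.sqrt r ≤ 1/16 := by
    have h1 : 256*c^2 ≤ r := le_trans (le_trans (le_max_left _ _) (le_max_right _ _)) hr
    have h2 : 16*c ≤ Real.sqrt r := Real.le_sqrt_of_sq_le (by nlinarith)
    rw [div_le_iff₀ hsr0]; linarith
  have hcrδ : c / Real.sqrt r ≤ δ/8 := by
    have h1 : 64*c^2/δ^2 ≤ r := le_trans (le_trans (le_max_right _ _) (le_max_right _ _)) hr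
    have h2 : 8*c/δ ≤ Real.sqrt r := by
      apply Real.le_sqrt_of_sq_le
      have e : (8*c/δ)^2 = 64*c^2/δ^2 := by field_simp; ring
      rw [e]; exact h1
    rw [div_le_iff₀ hδ] at h2
    rw [div_le_div_iff₀ hsr0 (by norm_num : (0:ℝ) < 8)]
    nlinarith
  have hRb0 : 0 ≤ r ^ (β-1) := Real.rpow_nonneg hr0.le _
  -- main induction
  have main : ∀ n : ℕ, ∀ m : ℝ, r < m → m ≤ r * (16/13)^n →
      T m ≤ A * m * r ^ (β-1) * (1 - (1/2) * (r/m) ^ (1-β)) := by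
    intro n
    induction n with
    | zero =>
      intro m h1 h2
      simp only [pow_zero, mul_one] at h2
      exact absurd h2 (not_le.2 h1)
    | succ n ih =>
      intro m hm1 hm2
      have hm0 : 0 < m := lt_trans hr0 hm1
      obtain ⟨α, hα, hs1, hs2, hT⟩ := hrec m hm1
      have hsm : Real.sqrt r ≤ Real.sqrt m := Real.sqrt_le_sqrt (le_of_lt hm1)
      have hE0 : 0 ≤ c / Real.sqrt m := div_nonneg hc (Real.sqrt_nonneg m)
      have hEr : c / Real.sqrt m ≤ c / Real.sqrt r := div_le_div_of_nonneg_left hc hsr0 hsm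
      have hα13 : ∀ i, α i ≤ 13/16 := fun i => by
        have := (hα i).2; linarith [hEr, hcr16]
      have hPm0 : 0 ≤ (r/m) ^ (1-β) := Real.rpow_nonneg (by positivity) _
      have hPm1 : (r/m) ^ (1-β) ≤ 1 :=
        Real.rpow_le_one (by positivity) ((div_le_one hm0).2 hm1.le) hq0.le
      have hM0 : 0 ≤ m ^ β := Real.rpow_nonneg hm0.le _
      have hG0 : 0 ≤ m * r ^ (β-1) := mul_nonneg hm0.le hRb0
      -- identity : m * r^(β-1) * (r/m)^(1-β) = m^β
      have h4 : m ^ β = m / m ^ (1-β) := by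
        have h := Real.rpow_sub hm0 1 (1-β)
        rw [Real.rpow_one, show (1:ℝ)-(1-β) = β by ring] at h
        exact h
      have hGP : m * r ^ (β-1) * ((r/m) ^ (1-β)) = m ^ β := by
        have e2 : r ^ (β-1) * r ^ (1-β) = 1 := by
          rw [← Real.rpow_add hr0]; norm_num
        calc m * r ^ (β-1) * ((r/m) ^ (1-β))
            = (m / m ^ (1-β)) * (r ^ (β-1) * r ^ (1-β)) := by
              rw [Real.div_rpow hr0.le hm0.le]; ring
          _ = m ^ β := by rw [e2, mul_one, ← h4]
      -- m^β ≤ m * r^(β-1)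
      have h6 : m ^ β = m * m ^ (β-1) := by
        have h := Real.rpow_add hm0 1 (β-1)
        rw [Real.rpow_one, show (1:ℝ)+(β-1) = β by ring] at h
        exact h
      have hMG : m ^ β ≤ m * r ^ (β-1) := by
        rw [h6]
        exact mul_le_mul_of_nonneg_left
          (Real.rpow_le_rpow_of_nonpos hr0 hm1.le (by linarith)) hm0.le
      -- sqrt bound
      have hEG : c / Real.sqrt m * (m * r ^ (β-1)) ≤ δ/8 * m ^ β := by
        have hsm0 : Real.sqrt m ≠ 0 := ne_of_gt (Real.sqrt_pos.2 hm0)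
        have hms : Real.sqrt m * Real.sqrt m = m := Real.mul_self_sqrt hm0.le
        have h7 : c / Real.sqrt m * (m * r ^ (β-1)) = c * (Real.sqrt m * r ^ (β-1)) := by
          field_simp
          linear_combination (-c) * Real.sq_sqrt hm0.le
        have k1 : r ^ ((1:ℝ)/2) * r ^ (β-1) = r ^ (β-(1:ℝ)/2) := by
          rw [← Real.rpow_add hr0]; congr 1; ring
        have k2 : r ^ (β-(1:ℝ)/2) ≤ m ^ (β-(1:ℝ)/2) :=
          Real.rpow_le_rpow hr0.le hm1.le (by linarith)
        have k3 : m ^ ((1:ℝ)/2) * m ^ (β-(1:ℝ)/2) = m ^ β := by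
          rw [← Real.rpow_add hm0]; congr 1; ring
        have k4 : Real.sqrt r * (Real.sqrt m * r ^ (β-1)) ≤ m ^ β := by
          rw [Real.sqrt_eq_rpow, Real.sqrt_eq_rpow]
          calc r ^ ((1:ℝ)/2) * (m ^ ((1:ℝ)/2) * r ^ (β-1))
              = m ^ ((1:ℝ)/2) * (r ^ ((1:ℝ)/2) * r ^ (β-1)) := by ring
            _ = m ^ ((1:ℝ)/2) * r ^ (β-(1:ℝ)/2) := by rw [k1]
            _ ≤ m ^ ((1:ℝ)/2) * m ^ (β-(1:ℝ)/2) :=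
                mul_le_mul_of_nonneg_left k2 (Real.rpow_nonneg hm0.le _)
            _ = m ^ β := k3
        have h8 : Real.sqrt m * r ^ (β-1) ≤ m ^ β / Real.sqrt r := by
          rw [le_div_iff₀ hsr0]; nlinarith [k4]
        rw [h7]
        calc c * (Real.sqrt m * r ^ (β-1)) ≤ c * (m ^ β / Real.sqrt r) :=
              mul_le_mul_of_nonneg_left h8 hc
          _ = c / Real.sqrt r * m ^ β := by ring
          _ ≤ δ/8 * m ^ β := mul_le_mul_of_nonneg_right hcrδ hM0
      -- (1+δ) * Pm identity
      have h1δP : (1+δ) * ((r/m) ^ (1-β)) = (r/((13/16)*m)) ^ (1-β) := by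
        have e : r/((13/16:ℝ)*m) = (16/13) * (r/m) := by
          field_simp
        rw [e, Real.mul_rpow (by norm_num) (by positivity), hδdef]
        ring
      by_cases hcase : r ≤ (13/16)*m
      · -- main case
        have hδP0 : 0 ≤ (1+δ) * ((r/m) ^ (1-β)) := mul_nonneg (by linarith) hPm0
        have h1δP1 : (1+δ) * ((r/m) ^ (1-β)) ≤ 1 := by
          rw [h1δP]
          exact Real.rpow_le_one (div_nonneg hr0.le (by linarith))
            ((div_le_one (by linarith)).2 hcase) hq0.le
        have hWnn : 0 ≤ 1 - (1/2) * ((1+δ) * ((r/m) ^ (1-β))) := by linarith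
        have hpiece : ∀ i, T (α i * m) ≤
            A * (α i * m) * r ^ (β-1) * (1 - (1/2) * ((1+δ) * ((r/m) ^ (1-β)))) := by
          intro i
          have hαm0 : 0 ≤ α i * m := mul_nonneg (hα i).1 hm0.le
          have hco : 0 ≤ A * (α i * m) * r ^ (β-1) :=
            mul_nonneg (mul_nonneg hA0.le hαm0) hRb0
          by_cases hsmall : α i * m ≤ r
          · rw [hT0 _ hsmall]
            exact mul_nonneg hco hWnn
          · push_neg at hsmall
            have hαm13 : α i * m ≤ (13/16)*m :=
              mul_le_mul_of_nonneg_right (hα13 i) hm0.le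
            have hle : α i * m ≤ r * (16/13)^n := by
              have e : (13/16:ℝ)*(r*(16/13)^(n+1)) = r*(16/13)^n := by
                rw [pow_succ]; ring
              linarith [hαm13, hm2]
            have hIH := ih (α i * m) hsmall hle
            have hbase : r/((13/16)*m) ≤ r/(α i * m) :=
              div_le_div_of_nonneg_left hr0.le (lt_trans hr0 hsmall) hαm13
            have hPcomp : (1+δ) * ((r/m) ^ (1-β)) ≤ (r/(α i * m)) ^ (1-β) := by
              rw [h1δP]
              exact Real.rpow_le_rpow (div_nonneg hr0.le (by linarith)) hbase hq0.le
            nlinarith [hIH, mul_nonneg hco (sub_nonneg.2 hPcomp)]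
        have hsum : ∑ i, T (α i * m) ≤
            A * m * r ^ (β-1) * (1 - (1/2) * ((1+δ) * ((r/m) ^ (1-β)))) * (∑ i, α i) := by
          calc ∑ i, T (α i * m)
              ≤ ∑ i, (A * m * r ^ (β-1) * (1 - (1/2) * ((1+δ) * ((r/m) ^ (1-β))))) * α i := by
                apply Finset.sum_le_sum
                intro i _
                calc T (α i * m)
                    ≤ A * (α i * m) * r ^ (β-1) * (1 - (1/2) * ((1+δ) * ((r/m) ^ (1-β)))) :=
                      hpiece i
                  _ = (A * m * r ^ (β-1) * (1 - (1/2) * ((1+δ) * ((r/m) ^ (1-β))))) * α i := by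
                      ring
            _ = A * m * r ^ (β-1) * (1 - (1/2) * ((1+δ) * ((r/m) ^ (1-β)))) * (∑ i, α i) := by
                rw [← Finset.mul_sum]
        have hcoeff0 : 0 ≤ A * m * r ^ (β-1) * (1 - (1/2) * ((1+δ) * ((r/m) ^ (1-β)))) :=
          mul_nonneg (mul_nonneg (mul_nonneg hA0.le hm0.le) hRb0) hWnn
        have hsum2 : ∑ i, T (α i * m) ≤
            A * m * r ^ (β-1) * (1 - (1/2) * ((1+δ) * ((r/m) ^ (1-β)))) * (1 + c / Real.sqrt m) :=
          le_trans hsum (mul_le_mul_of_nonneg_left hs2 hcoeff0)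
        -- the error-term bound
        have t1 : A * m * r ^ (β-1) * (1 - (1/2) * ((1+δ) * ((r/m) ^ (1-β)))) * (c / Real.sqrt m)
            ≤ A * m * r ^ (β-1) * (c / Real.sqrt m) := by
          nlinarith [mul_nonneg (mul_nonneg (mul_nonneg hA0.le hG0) hE0) hδP0]
        have t2 : A * m * r ^ (β-1) * (c / Real.sqrt m) ≤ A * (δ/8 * m ^ β) := by
          have h := mul_le_mul_of_nonneg_left hEG hA0.le
          nlinarith [h]
        have d1 : A * m * r ^ (β-1) * (1 - (1/2) * ((1+δ) * ((r/m) ^ (1-β)))) * (1 + c / Real.sqrt m)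
            = A * (m * r ^ (β-1)) - (1+δ)/2 * (A * (m * r ^ (β-1) * ((r/m) ^ (1-β))))
              + A * m * r ^ (β-1) * (1 - (1/2) * ((1+δ) * ((r/m) ^ (1-β)))) * (c / Real.sqrt m) := by
          ring
        rw [show m * r ^ (β-1) * ((r/m) ^ (1-β)) = m ^ β from hGP] at d1
        have d2 : A * m * r ^ (β-1) * (1 - (1/2) * ((r/m) ^ (1-β)))
            = A * (m * r ^ (β-1)) - (1/2) * (A * (m * r ^ (β-1) * ((r/m) ^ (1-β)))) := by
          ring
        rw [show m * r ^ (β-1) * ((r/m) ^ (1-β)) = m ^ β from hGP] at d2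
        have hfin : ρ * m ^ β + A * (δ/8 * m ^ β) ≤
            (1+δ)/2 * (A * m ^ β) - (1/2) * (A * m ^ β) := by
          nlinarith [mul_le_mul_of_nonneg_right hAρ3 hM0]
        linarith [hT, hsum2, t1, t2, d1, d2, hfin]
      · -- all subproblems below threshold
        push_neg at hcase
        have hz : ∑ i, T (α i * m) = 0 := by
          apply Finset.sum_eq_zero
          intro i _
          exact hT0 _ (le_of_lt (lt_of_le_of_lt
            (mul_le_mul_of_nonneg_right (hα13 i) hm0.le) hcase))
        rw [hz, add_zero] at hT
        have goal2 : ρ * m ^ β ≤ A * m * r ^ (β-1) * (1 - (1/2) * ((r/m) ^ (1-β))) := by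
          nlinarith [mul_nonneg (mul_nonneg hA0.le hG0) (by linarith : (0:ℝ) ≤ 1 - (r/m) ^ (1-β)),
            mul_le_mul_of_nonneg_left hMG hA0.le,
            mul_nonneg hM0 (by linarith : (0:ℝ) ≤ A - 2*ρ)]
        linarith
  -- conclusion
  intro m hm0
  rcases le_or_gt m r with h | h
  · rw [hT0 m h]
    exact div_nonneg (mul_nonneg hA0.le hm0.le) (Real.rpow_nonneg hr0.le _)
  · obtain ⟨n, hn⟩ := pow_unbounded_of_one_lt (m/r) (by norm_num : (1:ℝ) < 16/13)
    have hmn : m ≤ r * (16/13)^n := by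
      rw [div_lt_iff₀ hr0] at hn; nlinarith
    have hmain := main n m h hmn
    have hPm0 : 0 ≤ (r/m) ^ (1-β) := Real.rpow_nonneg (by positivity) _
    have hfin : A * m * r ^ (β-1) * (1 - (1/2) * (r/m) ^ (1-β)) ≤ A * m * r ^ (β-1) := by
      nlinarith [mul_nonneg (mul_nonneg hA0.le hm0.le) hRb0, hPm0]
    have hid : A * m / r ^ (1-β) = A * m * r ^ (β-1) := by
      rw [show (β-1 : ℝ) = -(1-β) by ring, Real.rpow_neg hr0.le, div_eq_mul_inv]
    rw [hid]
    linarith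
end

section
/- For every real ε > 0 there exists m₀ such that for all integers m ≥ m₀ the following holds: with P = {(a,b) ∈ ℤ × ℤ : 0 ≤ a < m, 0 ≤ b < m²} and L the family of lines {(x,y) : y = a·x + b} for integers 0 ≤ a < m, 0 ≤ b < m², for every pair of distinct points p, q ∈ P, the number of points w ∈ P with w ≠ p and w ≠ q such that some line of L contains both p and w and some line of L contains both q and w is at most m^(1+ε). -/
set_option maxHeartbeats 1000000

open scoped Classical

/-- The point set of the standard Szemerédi–Trotter construction:
integer points (a,b) with 0 ≤ a < m and 0 ≤ b < m². -/
noncomputable def gridP (m : ℕ) : Finset (ℤ × ℤ) := Finset.Ico 0 (m:ℤ) ×ˢ Finset.Ico 0 ((m:ℤ)^2)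

/-- Some line y = a·x + b of the construction (0 ≤ a < m, 0 ≤ b < m²)
contains both points p and q. -/
def onCommonLine (m : ℕ) (p q : ℤ × ℤ) : Prop :=
  ∃ a b : ℤ, 0 ≤ a ∧ a < (m:ℤ) ∧ 0 ≤ b ∧ b < (m:ℤ)^2 ∧
    p.2 = a * p.1 + b ∧ q.2 = a * q.1 + b

lemma aux_pow_bound {δ : ℝ} (hδ : 0 < δ) :
    ∃ K : ℝ, 1 ≤ K ∧ ∀ a : ℕ, (a + 1 : ℝ) ≤ K * (2:ℝ) ^ ((a:ℝ) * δ) := by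
  set c : ℝ := δ * Real.log 2 with hc
  have hc0 : 0 < c := mul_pos hδ (Real.log_pos (by norm_num))
  refine ⟨max 1 (1/c), le_max_left _ _, fun a => ?_⟩
  have h2 : (2:ℝ) ^ ((a:ℝ) * δ) = Real.exp (c * a) := by
    rw [Real.rpow_def_of_pos (by norm_num : (0:ℝ) < 2)]
    congr 1; rw [hc]; ring
  rw [h2]
  rcases Nat.eq_zero_or_pos a with rfl | ha
  · simp only [Nat.cast_zero, zero_add, mul_zero, Real.exp_zero, mul_one]
    exact le_max_left _ _
  · have hexp : 2 * (c * a) ≤ Real.exp (c * a) := by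
      have t := c * a / 2
      have h1 : (1 + c*a/2)^2 ≤ (Real.exp (c*a/2))^2 := by
        have := Real.add_one_le_exp (c*a/2)
        have hnn : 0 ≤ 1 + c*a/2 := by positivity
        nlinarith [this]
      have h3 : Real.exp (c*a) = (Real.exp (c*a/2))^2 := by
        rw [sq, ← Real.exp_add]; ring_nf
      nlinarith [sq_nonneg (1 - c*a/2)]
    have hK : 1/c ≤ max 1 (1/c) := le_max_right _ _
    have ha1 : (1:ℝ) ≤ a := by exact_mod_cast ha
    have : (a + 1 : ℝ) ≤ 2 * a := by linarith
    calc (a + 1 : ℝ) ≤ 2 * a := this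
      _ = (1/c) * (2 * (c * a)) := by field_simp
      _ ≤ (1/c) * Real.exp (c * a) := by
          apply mul_le_mul_of_nonneg_left hexp (by positivity)
      _ ≤ max 1 (1/c) * Real.exp (c * a) := by
          apply mul_le_mul_of_nonneg_right hK (Real.exp_nonneg _)

lemma divisor_bound {δ : ℝ} (hδ : 0 < δ) :
    ∃ C : ℝ, 1 ≤ C ∧ ∀ n : ℕ, n ≠ 0 → (n.divisors.card : ℝ) ≤ C * (n:ℝ) ^ δ := by
  obtain ⟨K, hK1, hK⟩ := aux_pow_bound hδ
  set B := ⌈(2:ℝ) ^ (1/δ)⌉₊ with hB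
  refine ⟨K ^ B, one_le_pow₀ hK1, fun n hn => ?_⟩
  rw [Nat.card_divisors hn]
  push_cast
  have hprod : (∏ p ∈ n.primeFactors, ((p:ℝ) ^ (n.factorization p))) = (n:ℝ) := by
    exact_mod_cast congrArg (Nat.cast : ℕ → ℝ) (Nat.factorization_prod_pow_eq_self hn)
  have hrpow : (n:ℝ) ^ δ = ∏ p ∈ n.primeFactors, ((p:ℝ) ^ (n.factorization p)) ^ δ := by
    rw [← hprod, ← Real.finset_prod_rpow _ _ (fun p _ => by positivity) δ]
  have hfac : ∀ p ∈ n.primeFactors, ((n.factorization p : ℝ) + 1) ≤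
      (if (p:ℝ) < (2:ℝ) ^ (1/δ) then K else 1) * ((p:ℝ) ^ (n.factorization p)) ^ δ := by
    intro p hp
    have hpp : p.Prime := Nat.prime_of_mem_primeFactors hp
    have hp2 : (2:ℝ) ≤ (p:ℝ) := by exact_mod_cast hpp.two_le
    set a := n.factorization p with ha
    have hre : ((p:ℝ) ^ a) ^ δ = (p:ℝ) ^ ((a:ℝ) * δ) := by
      rw [← Real.rpow_natCast (p:ℝ) a, ← Real.rpow_mul (by positivity)]
    rw [hre]
    split_ifs with hsmall
    · calc ((a:ℝ) + 1) ≤ K * (2:ℝ) ^ ((a:ℝ) * δ) := hK a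
        _ ≤ K * (p:ℝ) ^ ((a:ℝ) * δ) := by
            apply mul_le_mul_of_nonneg_left _ (le_trans zero_le_one hK1)
            exact Real.rpow_le_rpow (by norm_num) hp2 (by positivity)
    · push_neg at hsmall
      have h1 : ((a:ℝ) + 1) ≤ (2:ℝ) ^ ((a:ℝ)) := by
        rw [Real.rpow_natCast]
        exact_mod_cast (Nat.lt_two_pow_self (n := a))
      have h2 : (2:ℝ) ^ ((a:ℝ)) ≤ (p:ℝ) ^ ((a:ℝ) * δ) := by
        have := Real.rpow_le_rpow (by positivity) hsmall (by positivity : (0:ℝ) ≤ (a:ℝ) * δ)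
        rw [← Real.rpow_mul (by norm_num), one_div] at this
        rwa [show δ⁻¹ * ((a:ℝ) * δ) = (a:ℝ) by field_simp] at this
      rw [one_mul]; exact h1.trans h2
  calc (∏ p ∈ n.primeFactors, ((n.factorization p : ℝ) + 1))
      ≤ ∏ p ∈ n.primeFactors,
          ((if (p:ℝ) < (2:ℝ) ^ (1/δ) then K else 1) * ((p:ℝ) ^ (n.factorization p)) ^ δ) := by
        apply Finset.prod_le_prod (fun p _ => by positivity) hfac
    _ = (∏ p ∈ n.primeFactors, (if (p:ℝ) < (2:ℝ) ^ (1/δ) then K else 1)) *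
        (∏ p ∈ n.primeFactors, ((p:ℝ) ^ (n.factorization p)) ^ δ) := Finset.prod_mul_distrib
    _ ≤ K ^ B * (n:ℝ) ^ δ := by
        rw [← hrpow]
        apply mul_le_mul_of_nonneg_right _ (Real.rpow_nonneg (Nat.cast_nonneg n) δ)
        rw [Finset.prod_ite, Finset.prod_const, Finset.prod_const, one_pow, mul_one]
        have hsub : n.primeFactors.filter (fun p : ℕ => ((p:ℝ) < (2:ℝ) ^ (1/δ))) ⊆ Finset.range B := by
          intro p hp
          simp only [Finset.mem_filter] at hp
          have : (p:ℝ) < (B:ℝ) := lt_of_lt_of_le hp.2 (Nat.le_ceil _)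
          exact Finset.mem_range.mpr (Nat.cast_lt.mp this)
        exact pow_le_pow_right₀ hK1 (le_trans (Finset.card_le_card hsub) (by simp))

lemma slope_ex {m : ℕ} {p w : ℤ × ℤ} (h : onCommonLine m p w) :
    ∃ a : ℤ, 0 ≤ a ∧ a < (m:ℤ) ∧ w.2 - p.2 = a * (w.1 - p.1) := by
  obtain ⟨a, b, h1, h2, _, _, h5, h6⟩ := h
  exact ⟨a, h1, h2, by rw [h5, h6]; ring⟩

lemma count_AP (F : Finset ℤ) (N A L : ℤ) (hN : 0 < N) (hL : 0 ≤ L)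
    (hmem : ∀ y ∈ F, A ≤ y ∧ y < A + L)
    (hdvd : ∀ y ∈ F, ∀ z ∈ F, N ∣ y - z) :
    (F.card : ℝ) ≤ (L:ℝ) / (N:ℝ) + 1 := by
  have hmaps : ∀ y ∈ F, (y - A) / N ∈ Finset.Ico (0:ℤ) (L / N + 1) := by
    intro y hy
    obtain ⟨h1, h2⟩ := hmem y hy
    refine Finset.mem_Ico.mpr ⟨Int.ediv_nonneg (by linarith) hN.le, ?_⟩
    have : (y - A) / N ≤ L / N := Int.ediv_le_ediv hN (by linarith)
    omega
  have hinj : Set.InjOn (fun y => (y - A) / N) F := by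
    intro y hy z hz hyz
    obtain ⟨k, hk⟩ := hdvd y hy z hz
    simp only at hyz
    have h2 : y - A = (z - A) + k * N := by linear_combination hk
    rw [h2, Int.add_mul_ediv_right _ _ hN.ne'] at hyz
    have hk0 : k = 0 := by omega
    rw [hk0, mul_zero] at hk
    omega
  have hcard := Finset.card_le_card_of_injOn _ hmaps hinj
  rw [Int.card_Ico] at hcard
  have h0 : 0 ≤ L / N := Int.ediv_nonneg hL hN.le
  have hcard' : (F.card : ℤ) ≤ L / N + 1 := by omega
  have hcast : (F.card : ℝ) ≤ ((L / N : ℤ) : ℝ) + 1 := by exact_mod_cast hcard'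
  have : ((L / N : ℤ) : ℝ) ≤ (L:ℝ) / (N:ℝ) := by
    rw [le_div_iff₀ (by exact_mod_cast hN)]
    exact_mod_cast Int.ediv_mul_le L hN.ne'
  linarith

lemma sum_pos_part (m : ℕ) :
    ∑ k ∈ Finset.Icc (1:ℤ) (m:ℤ), 1 / |(k:ℝ)| ≤ 1 + Real.log m := by
  have heq : ∑ k ∈ Finset.Icc (1:ℤ) (m:ℤ), 1 / |(k:ℝ)|
      = ∑ i ∈ Finset.Icc 1 m, ((i:ℝ))⁻¹ := by
    refine Finset.sum_nbij' (fun k => k.toNat) (fun i => (i:ℤ)) ?_ ?_ ?_ ?_ ?_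
    · intro k hk
      simp only [Finset.mem_Icc] at hk ⊢
      omega
    · intro i hi
      simp only [Finset.mem_Icc] at hi ⊢
      omega
    · intro k hk
      simp only [Finset.mem_Icc] at hk
      exact Int.toNat_of_nonneg (by omega)
    · intro i hi
      simp
    · intro k hk
      simp only [Finset.mem_Icc] at hk
      rw [abs_of_pos (by exact_mod_cast hk.1 : (0:ℝ) < (k:ℝ))]
      rw [one_div]
      congr 1
      exact_mod_cast (Int.toNat_of_nonneg (by omega)).symm
  rw [heq]
  have h2 : (harmonic m : ℝ) ≤ 1 + Real.log m := harmonic_le_one_add_log m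
  refine le_trans (le_of_eq ?_) h2
  rw [harmonic_eq_sum_Icc]
  push_cast
  rfl

lemma sum_U_bound (m : ℕ) :
    ∑ u ∈ (Finset.Icc (-(m:ℤ)) (m:ℤ)).erase 0, 1 / |(u:ℝ)| ≤ 2 * (1 + Real.log m) := by
  set P := Finset.Icc (1:ℤ) (m:ℤ) with hP
  set Npart := P.image (fun k => -k) with hN
  have hsub : (Finset.Icc (-(m:ℤ)) (m:ℤ)).erase 0 ⊆ P ∪ Npart := by
    intro u hu
    simp only [Finset.mem_erase, Finset.mem_Icc] at hu
    rcases lt_or_gt_of_ne hu.1 with h | h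
    · refine Finset.mem_union_right _ (Finset.mem_image.mpr ⟨-u, ?_, by ring⟩)
      simp only [hP, Finset.mem_Icc]; omega
    · refine Finset.mem_union_left _ ?_
      simp only [hP, Finset.mem_Icc]; omega
  have hdisj : Disjoint P Npart := by
    rw [Finset.disjoint_left]
    intro k hk hk'
    simp only [hP, Finset.mem_Icc] at hk
    simp only [hN, Finset.mem_image] at hk'
    obtain ⟨k', hk', he⟩ := hk'
    simp only [hP, Finset.mem_Icc] at hk'
    omega
  calc ∑ u ∈ (Finset.Icc (-(m:ℤ)) (m:ℤ)).erase 0, 1 / |(u:ℝ)|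
      ≤ ∑ u ∈ P ∪ Npart, 1 / |(u:ℝ)| := by
        refine Finset.sum_le_sum_of_subset_of_nonneg hsub (fun u _ _ => by positivity)
    _ = ∑ u ∈ P, 1 / |(u:ℝ)| + ∑ u ∈ Npart, 1 / |(u:ℝ)| := Finset.sum_union hdisj
    _ = ∑ u ∈ P, 1 / |(u:ℝ)| + ∑ u ∈ P, 1 / |(u:ℝ)| := by
        congr 1
        rw [hN, Finset.sum_image (by intro a _ b _ h; exact neg_inj.mp h)]
        apply Finset.sum_congr rfl
        intro k _
        push_cast
        rw [abs_neg]
    _ ≤ 2 * (1 + Real.log m) := by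
        have := sum_pos_part m
        linarith

lemma caseA (m : ℕ) (p q : ℤ × ℤ) (hpq : p ≠ q) (h1 : p.1 = q.1) :
    (((gridP m).filter (fun w => w ≠ p ∧ w ≠ q ∧
        onCommonLine m p w ∧ onCommonLine m q w)).card : ℝ)
      ≤ 2 * ((p.2 - q.2).natAbs.divisors.card : ℝ) * m := by
  set S := (gridP m).filter (fun w => w ≠ p ∧ w ≠ q ∧
        onCommonLine m p w ∧ onCommonLine m q w) with hS
  set d : ℤ := p.2 - q.2 with hdd
  have hd0 : d ≠ 0 := by
    intro h
    exact hpq (Prod.ext h1 (by omega))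
  set D : Finset ℤ := (d.natAbs.divisors.image (fun k : ℕ => (k:ℤ))) ∪
      (d.natAbs.divisors.image (fun k : ℕ => -(k:ℤ))) with hD
  have key : ∀ w ∈ S, (w.1 - p.1 ≠ 0) ∧ (w.1 - p.1) ∣ d ∧
      (w.2 - p.2) / (w.1 - p.1) ∈ Finset.Ico (0:ℤ) (m:ℤ) ∧
      w.2 - p.2 = ((w.2 - p.2) / (w.1 - p.1)) * (w.1 - p.1) := by
    intro w hw
    rw [hS, Finset.mem_filter] at hw
    obtain ⟨hwg, hwp, hwq, hcp, hcq⟩ := hw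
    obtain ⟨a₁, ha₁0, ha₁m, e₁⟩ := slope_ex hcp
    obtain ⟨a₂, ha₂0, ha₂m, e₂⟩ := slope_ex hcq
    have hs : w.1 - p.1 ≠ 0 := by
      intro h
      apply hwp
      exact Prod.ext (by omega) (by rw [h, mul_zero] at e₁; omega)
    have hdiv : (w.2 - p.2) / (w.1 - p.1) = a₁ := by
      rw [e₁, Int.mul_ediv_cancel _ hs]
    refine ⟨hs, ⟨a₂ - a₁, ?_⟩, ?_, ?_⟩
    · have : w.1 - q.1 = w.1 - p.1 := by rw [h1]
      rw [this] at e₂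
      have hd2 : d = (w.2 - q.2) - (w.2 - p.2) := by rw [hdd]; rw [show p.2 - q.2 = (w.2 - q.2) - (w.2 - p.2) by ring]
      rw [hd2, e₁, e₂]; ring
    · rw [hdiv]; exact Finset.mem_Ico.mpr ⟨ha₁0, ha₁m⟩
    · rw [hdiv]; exact e₁
  have hmaps : ∀ w ∈ S, (w.1 - p.1, (w.2 - p.2) / (w.1 - p.1)) ∈
      D ×ˢ Finset.Ico (0:ℤ) (m:ℤ) := by
    intro w hw
    obtain ⟨hs, hdvd, hmem, _⟩ := key w hw
    refine Finset.mem_product.mpr ⟨?_, hmem⟩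
    have hnd : (w.1 - p.1).natAbs ∈ d.natAbs.divisors :=
      Nat.mem_divisors.mpr ⟨Int.natAbs_dvd_natAbs.mpr hdvd, Int.natAbs_ne_zero.mpr hd0⟩
    rcases Int.natAbs_eq (w.1 - p.1) with h | h
    · exact Finset.mem_union_left _ (Finset.mem_image.mpr ⟨_, hnd, h.symm⟩)
    · exact Finset.mem_union_right _ (Finset.mem_image.mpr ⟨_, hnd, h.symm⟩)
  have hinj : Set.InjOn (fun w : ℤ × ℤ => (w.1 - p.1, (w.2 - p.2) / (w.1 - p.1))) S := by
    intro w hw w' hw' h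
    obtain ⟨_, _, _, e⟩ := key w hw
    obtain ⟨_, _, _, e'⟩ := key w' hw'
    simp only [Prod.mk.injEq] at h
    have h1' : w.1 = w'.1 := by omega
    refine Prod.ext h1' ?_
    have : w.2 - p.2 = w'.2 - p.2 := by rw [e, h.2, h.1, ← e']
    omega
  have hcard := Finset.card_le_card_of_injOn _ hmaps hinj
  rw [Finset.card_product, Int.card_Ico] at hcard
  have hDcard : D.card ≤ 2 * d.natAbs.divisors.card := by
    refine le_trans (Finset.card_union_le _ _) ?_
    have := Finset.card_image_le (s := d.natAbs.divisors) (f := fun k : ℕ => (k:ℤ))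
    have := Finset.card_image_le (s := d.natAbs.divisors) (f := fun k : ℕ => -(k:ℤ))
    omega
  have : S.card ≤ 2 * d.natAbs.divisors.card * m := by
    calc S.card ≤ D.card * ((m:ℤ) - 0).toNat := hcard
      _ = D.card * m := by norm_num
      _ ≤ 2 * d.natAbs.divisors.card * m := Nat.mul_le_mul_right _ hDcard
  exact_mod_cast this

lemma caseB (m : ℕ) (p q : ℤ × ℤ) (hp : p ∈ gridP m) (hq : q ∈ gridP m)
    (h1 : p.1 ≠ q.1) :
    (((gridP m).filter (fun w => w ≠ p ∧ w ≠ q ∧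
        onCommonLine m p w ∧ onCommonLine m q w)).card : ℝ)
      ≤ (m:ℝ) + 2 * m * (((q.1 - p.1).natAbs.divisors.card : ℝ) * (2 * (1 + Real.log m))) := by
  set S := (gridP m).filter (fun w => w ≠ p ∧ w ≠ q ∧
        onCommonLine m p w ∧ onCommonLine m q w) with hS
  simp only [gridP, Finset.mem_product, Finset.mem_Ico] at hp hq
  have hm1 : 1 ≤ m := by
    rcases hp with ⟨⟨h, h'⟩, _⟩
    have : (0:ℤ) < m := lt_of_le_of_lt h h'
    exact_mod_cast this
  set Δ : ℤ := q.1 - p.1 with hΔdef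
  have hΔ : Δ ≠ 0 := fun h => h1 (by omega)
  set X : Finset ℤ := ((Finset.Ico (0:ℤ) (m:ℤ)).erase p.1).erase q.1 with hX
  set g : ℤ → ℕ := fun x => Int.gcd (x - p.1) (x - q.1) with hg
  set v : ℤ → ℤ := fun x => (x - q.1) / (g x : ℤ) with hv
  -- basic facts for x ∈ X
  have hXfacts : ∀ x ∈ X, x - p.1 ≠ 0 ∧ x - q.1 ≠ 0 ∧ 0 ≤ x ∧ x < (m:ℤ) := by
    intro x hx
    simp only [hX, Finset.mem_erase, Finset.mem_Ico] at hx
    exact ⟨by omega, by omega, hx.2.2.1, hx.2.2.2⟩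
  have hgpos : ∀ x ∈ X, 0 < g x := by
    intro x hx
    exact Int.gcd_pos_iff.mpr (Or.inl (hXfacts x hx).1)
  have hgv : ∀ x ∈ X, (g x : ℤ) * v x = x - q.1 := by
    intro x hx
    exact Int.mul_ediv_cancel' (Int.gcd_dvd_right _ _)
  have hv0 : ∀ x ∈ X, v x ≠ 0 := by
    intro x hx h
    have := hgv x hx
    rw [h, mul_zero] at this
    exact (hXfacts x hx).2.1 this.symm
  -- every w in S has w.1 ∈ X
  have hmapX : ∀ w ∈ S, w.1 ∈ X := by
    intro w hw
    rw [hS, Finset.mem_filter] at hw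
    obtain ⟨hwg, hwp, hwq, hcp, hcq⟩ := hw
    simp only [gridP, Finset.mem_product, Finset.mem_Ico] at hwg
    obtain ⟨a₁, _, _, e₁⟩ := slope_ex hcp
    obtain ⟨a₂, _, _, e₂⟩ := slope_ex hcq
    simp only [hX, Finset.mem_erase, Finset.mem_Ico]
    refine ⟨?_, ?_, hwg.1.1, hwg.1.2⟩
    · intro h
      rw [show w.1 - q.1 = 0 by omega, mul_zero] at e₂
      exact hwq (Prod.ext h (by omega))
    · intro h
      rw [show w.1 - p.1 = 0 by omega, mul_zero] at e₁
      exact hwp (Prod.ext h (by omega))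
  have hcard : S.card = ∑ x ∈ X, (S.filter (fun w => w.1 = x)).card :=
    Finset.card_eq_sum_card_fiberwise hmapX
  -- fiber bound
  have hfiber : ∀ x ∈ X, ((S.filter (fun w => w.1 = x)).card : ℝ)
      ≤ 2 * m * (1 / |(v x : ℝ)|) + 1 := by
    intro x hx
    obtain ⟨hs0, ht0, hx0, hxm⟩ := hXfacts x hx
    set s : ℤ := x - p.1 with hsdef
    set t : ℤ := x - q.1 with htdef
    set F : Finset ℤ := (S.filter (fun w => w.1 = x)).image Prod.snd with hF
    have himg : (S.filter (fun w => w.1 = x)).card = F.card := by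
      rw [hF]
      refine (Finset.card_image_of_injOn ?_).symm
      intro w hw w' hw' h
      simp only [Finset.mem_coe, Finset.mem_filter] at hw hw'
      exact Prod.ext (hw.2.trans hw'.2.symm) h
    have hmemF : ∀ y ∈ F, (∃ a₁ : ℤ, 0 ≤ a₁ ∧ a₁ < (m:ℤ) ∧ y - p.2 = a₁ * s) ∧
        (∃ a₂ : ℤ, 0 ≤ a₂ ∧ a₂ < (m:ℤ) ∧ y - q.2 = a₂ * t) := by
      intro y hy
      rw [hF] at hy
      obtain ⟨w, hw, hwy⟩ := Finset.mem_image.mp hy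
      rw [Finset.mem_filter] at hw
      obtain ⟨hwS, hwx⟩ := hw
      rw [hS, Finset.mem_filter] at hwS
      obtain ⟨_, _, _, hcp, hcq⟩ := hwS
      obtain ⟨a₁, ha₁, ha₁', e₁⟩ := slope_ex hcp
      obtain ⟨a₂, ha₂, ha₂', e₂⟩ := slope_ex hcq
      rw [hwx, hwy] at e₁ e₂
      exact ⟨⟨a₁, ha₁, ha₁', e₁⟩, ⟨a₂, ha₂, ha₂', e₂⟩⟩
    set N : ℤ := (Int.lcm s t : ℤ) with hNdef
    have hgN : (g x : ℤ) * N = |s| * |t| := by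
      have := Int.gcd_mul_lcm s t
      have h2 : ((Int.gcd s t * Int.lcm s t : ℕ) : ℤ) = ((s*t).natAbs : ℤ) := by
        exact_mod_cast congrArg (Nat.cast : ℕ → ℤ) (this.trans (Int.natAbs_mul s t).symm)
      push_cast at h2
      push_cast at h2
      rw [abs_mul] at h2
      exact_mod_cast h2
    have hN : 0 < N := by
      have h1 : 0 < |s| * |t| := mul_pos (abs_pos.mpr hs0) (abs_pos.mpr ht0)
      by_contra h
      push_neg at h
      nlinarith [hgpos x hx, hgN, (by exact_mod_cast hgpos x hx : (0:ℤ) < (g x : ℤ))]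
    set A : ℤ := p.2 - ((m:ℤ) - 1) * |s| with hAdef
    set L : ℤ := 2 * ((m:ℤ) - 1) * |s| + 1 with hLdef
    have hmem : ∀ y ∈ F, A ≤ y ∧ y < A + L := by
      intro y hy
      obtain ⟨⟨a₁, ha₁, ha₁', e₁⟩, _⟩ := hmemF y hy
      have habs : |y - p.2| ≤ ((m:ℤ) - 1) * |s| := by
        rw [e₁, abs_mul]
        apply mul_le_mul_of_nonneg_right _ (abs_nonneg s)
        rw [abs_of_nonneg ha₁]; omega
      rw [abs_le] at habs
      constructor
      · rw [hAdef]; linarith [habs.1]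
      · rw [hAdef, hLdef]; linarith [habs.2]
    have hdvd : ∀ y ∈ F, ∀ z ∈ F, N ∣ y - z := by
      intro y hy z hz
      obtain ⟨⟨a₁, _, _, e₁⟩, ⟨a₂, _, _, e₂⟩⟩ := hmemF y hy
      obtain ⟨⟨b₁, _, _, f₁⟩, ⟨b₂, _, _, f₂⟩⟩ := hmemF z hz
      refine Int.dvd_natAbs.mp (Int.natCast_dvd_natCast.mpr <| Int.lcm_dvd (a := s) (b := t) (c := (y - z).natAbs) (Int.dvd_natAbs.mpr (⟨a₁ - b₁, by linear_combination e₁ - f₁⟩ : s ∣ y - z))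
        (Int.dvd_natAbs.mpr (⟨a₂ - b₂, by linear_combination e₂ - f₂⟩ : t ∣ y - z)))
    have hL : (0:ℤ) ≤ L := by
      have hm1' : (1:ℤ) ≤ (m:ℤ) := by exact_mod_cast hm1
      rw [hLdef]
      nlinarith [abs_nonneg s]
    have hcAP := count_AP F N A L hN hL hmem hdvd
    rw [himg]
    refine hcAP.trans ?_
    have hvpos : (0:ℝ) < |(v x : ℝ)| := by
      rw [abs_pos]
      exact_mod_cast hv0 x hx
    have hspos : (0:ℝ) < |(s:ℝ)| := by
      rw [abs_pos]; exact_mod_cast hs0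
    have hNpos : (0:ℝ) < (N:ℝ) := by exact_mod_cast hN
    have hNr : (N:ℝ) = |(s:ℝ)| * |(v x : ℝ)| := by
      have hgr : (0:ℝ) < (g x : ℝ) := by exact_mod_cast hgpos x hx
      have h2 : (g x : ℝ) * (N:ℝ) = |(s:ℝ)| * |(t:ℝ)| := by
        have := hgN
        have := congrArg (Int.cast : ℤ → ℝ) hgN
        push_cast at this
        convert this using 2 <;> rw [Int.cast_abs]
      have h3 : |(t:ℝ)| = (g x : ℝ) * |(v x : ℝ)| := by
        have h4 : ((g x : ℤ) * v x : ℤ) = t := hgv x hx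
        have h5 := congrArg (Int.cast : ℤ → ℝ) h4
        push_cast at h5
        rw [← h5, abs_mul, abs_of_pos hgr]
      apply mul_left_cancel₀ (ne_of_gt hgr)
      rw [h2, h3]; ring
    have hLr : (L:ℝ) ≤ 2 * m * |(s:ℝ)| := by
      have h1 : (1:ℝ) ≤ |(s:ℝ)| := by
        have h0 : (0:ℤ) < |s| := abs_pos.mpr hs0
        have : (1:ℤ) ≤ |s| := by omega
        calc (1:ℝ) ≤ ((|s| : ℤ) : ℝ) := by exact_mod_cast this
          _ = |(s:ℝ)| := by rw [Int.cast_abs]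
      have hm1r : (1:ℝ) ≤ (m:ℝ) := by exact_mod_cast hm1
      push_cast [hLdef]
      nlinarith
    calc (L:ℝ)/(N:ℝ) + 1 ≤ (2 * m * |(s:ℝ)|) / (N:ℝ) + 1 := by
          apply add_le_add_left
          exact div_le_div_of_nonneg_right hLr hNpos.le
        _ = 2 * m * (1 / |(v x : ℝ)|) + 1 := by
          rw [hNr]
          field_simp
  -- sum the fiber bounds
  have hXcard : (X.card : ℝ) ≤ (m:ℝ) := by
    have hsub : X ⊆ Finset.Ico (0:ℤ) (m:ℤ) :=
      (Finset.erase_subset _ _).trans (Finset.erase_subset _ _)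
    have := Finset.card_le_card hsub
    rw [Int.card_Ico] at this
    have h2 : ((m:ℤ) - 0).toNat = m := by omega
    rw [h2] at this
    exact_mod_cast this
  have hsum : ∑ x ∈ X, 1 / |(v x : ℝ)| ≤
      ((Δ.natAbs.divisors.card : ℝ)) * (2 * (1 + Real.log m)) := by
    set U := (Finset.Icc (-(m:ℤ)) (m:ℤ)).erase 0 with hU
    set T := Δ.natAbs.divisors ×ˢ U with hT
    have hinj : ∀ x ∈ X, ∀ x' ∈ X, (g x, v x) = (g x', v x') → x = x' := by
      intro x hx x' hx' h
      simp only [Prod.mk.injEq] at h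
      have e1 := hgv x hx
      have e2 := hgv x' hx'
      rw [h.1, h.2] at e1
      omega
    have himage : X.image (fun x => (g x, v x)) ⊆ T := by
      intro y hy
      obtain ⟨x, hx, rfl⟩ := Finset.mem_image.mp hy
      obtain ⟨hs0, ht0, hx0, hxm⟩ := hXfacts x hx
      refine Finset.mem_product.mpr ⟨?_, ?_⟩
      · refine Nat.mem_divisors.mpr ⟨?_, Int.natAbs_ne_zero.mpr hΔ⟩
        have hdvd : ((g x : ℤ)) ∣ Δ := by
          have h1 : ((g x : ℤ)) ∣ (x - p.1) := Int.gcd_dvd_left _ _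
          have h2 : ((g x : ℤ)) ∣ (x - q.1) := Int.gcd_dvd_right _ _
          have := dvd_sub h2 h1
          rwa [show (x - q.1) - (x - p.1) = -Δ by rw [hΔdef]; ring, dvd_neg] at this
        have := Int.natAbs_dvd_natAbs.mpr hdvd
        rwa [Int.natAbs_natCast] at this
      · simp only [hU, Finset.mem_erase, Finset.mem_Icc]
        refine ⟨hv0 x hx, ?_⟩
        have habs_t : |x - q.1| ≤ (m:ℤ) := abs_le.mpr ⟨by omega, by omega⟩
        have habs_eq : |x - q.1| = (g x : ℤ) * |v x| := by
          rw [← hgv x hx, abs_mul, abs_of_nonneg (by positivity : (0:ℤ) ≤ (g x : ℤ))]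
        have hg1 : (1:ℤ) ≤ (g x : ℤ) := by exact_mod_cast hgpos x hx
        have hvle : |v x| ≤ (m:ℤ) := by nlinarith [abs_nonneg (v x)]
        exact abs_le.mp hvle
    have h1 : ∑ x ∈ X, 1 / |(v x : ℝ)| = ∑ y ∈ X.image (fun x => (g x, v x)), 1 / |(y.2 : ℝ)| := by
      rw [Finset.sum_image hinj]
    calc ∑ x ∈ X, 1 / |(v x : ℝ)|
        = ∑ y ∈ X.image (fun x => (g x, v x)), 1 / |(y.2 : ℝ)| := h1
      _ ≤ ∑ y ∈ T, 1 / |(y.2 : ℝ)| :=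
          Finset.sum_le_sum_of_subset_of_nonneg himage (fun y _ _ => by positivity)
      _ = ∑ _d ∈ Δ.natAbs.divisors, ∑ u ∈ U, 1 / |(u:ℝ)| := by
          rw [hT, Finset.sum_product]
      _ = ((Δ.natAbs.divisors.card : ℝ)) * ∑ u ∈ U, 1 / |(u:ℝ)| := by
          rw [Finset.sum_const, nsmul_eq_mul]
      _ ≤ ((Δ.natAbs.divisors.card : ℝ)) * (2 * (1 + Real.log m)) := by
          exact mul_le_mul_of_nonneg_left (sum_U_bound m) (by positivity)
  have hcastS : (S.card : ℝ) = ∑ x ∈ X, ((S.filter (fun w => w.1 = x)).card : ℝ) := by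
    rw [hcard]; push_cast; rfl
  calc (S.card : ℝ) = ∑ x ∈ X, ((S.filter (fun w => w.1 = x)).card : ℝ) := hcastS
    _ ≤ ∑ x ∈ X, (2 * m * (1 / |(v x : ℝ)|) + 1) := Finset.sum_le_sum hfiber
    _ = 2 * m * (∑ x ∈ X, 1 / |(v x : ℝ)|) + X.card := by
        rw [Finset.sum_add_distrib, Finset.sum_const, ← Finset.mul_sum, nsmul_eq_mul, mul_one]
    _ ≤ 2 * m * (((Δ.natAbs.divisors.card : ℝ)) * (2 * (1 + Real.log m))) + m := by
        refine add_le_add ?_ hXcard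
        exact mul_le_mul_of_nonneg_left hsum (by positivity)
    _ = (m:ℝ) + 2 * m * (((Δ.natAbs.divisors.card : ℝ)) * (2 * (1 + Real.log m))) := by ring

theorem grid_common_neighbors (ε : ℝ) (hε : 0 < ε) :
    ∃ m₀ : ℕ, ∀ m : ℕ, m₀ ≤ m →
      ∀ p ∈ gridP m, ∀ q ∈ gridP m, p ≠ q →
        (((gridP m).filter (fun w => w ≠ p ∧ w ≠ q ∧
            onCommonLine m p w ∧ onCommonLine m q w)).card : ℝ)
          ≤ (m : ℝ) ^ ((1:ℝ) + ε) := by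
  set δ : ℝ := ε / 4 with hδdef
  have hδ : 0 < δ := by positivity
  obtain ⟨C, hC1, hC⟩ := divisor_bound hδ
  set C₂ : ℝ := 2*C + 1 + 4*C*(1 + 1/δ) with hC₂def
  have h1δ : 0 < 1/δ := by positivity
  have hCδ : 0 < C * (1/δ) := mul_pos (by linarith) h1δ
  have hC₂1 : 1 ≤ C₂ := by rw [hC₂def]; nlinarith
  refine ⟨max 2 (⌈C₂ ^ ((2:ℝ)/ε)⌉₊ + 1), fun m hm p hp q hq hpq => ?_⟩
  have hm2 : 2 ≤ m := le_trans (le_max_left _ _) hm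
  have hm1r : (1:ℝ) ≤ (m:ℝ) := by exact_mod_cast le_trans (by norm_num) hm2
  have hm0 : (0:ℝ) < (m:ℝ) := by linarith
  have hmc : C₂ ^ ((2:ℝ)/ε) < (m:ℝ) := by
    have h1 : (⌈C₂ ^ ((2:ℝ)/ε)⌉₊ + 1 : ℕ) ≤ m := le_trans (le_max_right _ _) hm
    have h2 : ((⌈C₂ ^ ((2:ℝ)/ε)⌉₊ : ℕ) : ℝ) < (m:ℝ) := by exact_mod_cast h1
    exact lt_of_le_of_lt (Nat.le_ceil _) h2
  have hC₂m : C₂ ≤ (m:ℝ) ^ (ε/2) := by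
    have h0 : (0:ℝ) < C₂ := by linarith
    calc C₂ = (C₂ ^ ((2:ℝ)/ε)) ^ (ε/2) := by
          rw [← Real.rpow_mul h0.le]
          rw [show (2:ℝ)/ε * (ε/2) = 1 by field_simp]
          rw [Real.rpow_one]
      _ ≤ (m:ℝ) ^ (ε/2) := Real.rpow_le_rpow (by positivity) hmc.le (by positivity)
  have hmain : (((gridP m).filter (fun w => w ≠ p ∧ w ≠ q ∧
      onCommonLine m p w ∧ onCommonLine m q w)).card : ℝ)
      ≤ C₂ * (m:ℝ) ^ ((1:ℝ) + ε/2) := by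
    have hEpos : (0:ℝ) < (m:ℝ) ^ δ := Real.rpow_pos_of_pos hm0 δ
    have hE1 : (1:ℝ) ≤ (m:ℝ) ^ δ := Real.one_le_rpow hm1r hδ.le
    have hgp := hp
    have hgq := hq
    simp only [gridP, Finset.mem_product, Finset.mem_Ico] at hgp hgq
    have hMle : (m:ℝ) ≤ (m:ℝ) ^ ((1:ℝ) + ε/2) := by
      conv_lhs => rw [← Real.rpow_one (m:ℝ)]
      exact Real.rpow_le_rpow_of_exponent_le hm1r (by linarith)
    have heq : (m:ℝ) ^ ((1:ℝ) + ε/2) = (m:ℝ) * ((m:ℝ) ^ δ * (m:ℝ) ^ δ) := by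
      rw [show (1:ℝ) + ε/2 = 1 + δ + δ by rw [hδdef]; ring]
      rw [Real.rpow_add hm0, Real.rpow_add hm0, Real.rpow_one]
      ring
    by_cases hx : p.1 = q.1
    · refine (caseA m p q hpq hx).trans ?_
      have hd0 : p.2 - q.2 ≠ 0 := by
        intro h
        exact hpq (Prod.ext hx (by omega))
      have hd0' : (p.2 - q.2).natAbs ≠ 0 := Int.natAbs_ne_zero.mpr hd0
      have h2 : (((p.2 - q.2).natAbs : ℕ) : ℤ) ≤ (m:ℤ)^2 := by
        rw [Int.natCast_natAbs]
        refine abs_le.mpr ⟨by linarith [hgp.2.1, hgp.2.2, hgq.2.1, hgq.2.2],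
          by linarith [hgp.2.1, hgp.2.2, hgq.2.1, hgq.2.2]⟩
      have h3 : (((p.2 - q.2).natAbs : ℕ) : ℝ) ≤ ((m:ℝ))^(2:ℕ) := by exact_mod_cast h2
      have h5 : (((m:ℝ))^(2:ℕ)) ^ δ = (m:ℝ) ^ δ * (m:ℝ) ^ δ := by
        rw [← Real.rpow_natCast (m:ℝ) 2, ← Real.rpow_mul hm0.le,
          show ((2:ℕ):ℝ) * δ = δ + δ by push_cast; ring, Real.rpow_add hm0]
      have hτ : (((p.2 - q.2).natAbs.divisors.card : ℕ) : ℝ) ≤ C * ((m:ℝ) ^ δ * (m:ℝ) ^ δ) := by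
        refine (hC _ hd0').trans ?_
        rw [← h5]
        exact mul_le_mul_of_nonneg_left
          (Real.rpow_le_rpow (by positivity) h3 hδ.le) (by linarith)
      calc 2 * (((p.2 - q.2).natAbs.divisors.card : ℕ) : ℝ) * m
          ≤ 2 * (C * ((m:ℝ) ^ δ * (m:ℝ) ^ δ)) * m := by
            have h6 : 0 ≤ (m:ℝ) := hm0.le
            nlinarith [hτ, hm0.le]
        _ = 2 * C * ((m:ℝ) ^ ((1:ℝ) + ε/2)) := by rw [heq]; ring
        _ ≤ C₂ * (m:ℝ) ^ ((1:ℝ) + ε/2) := by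
            refine mul_le_mul_of_nonneg_right (by rw [hC₂def]; nlinarith) (by positivity)
    · refine (caseB m p q hp hq hx).trans ?_
      have hΔ0 : q.1 - p.1 ≠ 0 := fun h => hx (by omega)
      have hΔ0' : (q.1 - p.1).natAbs ≠ 0 := Int.natAbs_ne_zero.mpr hΔ0
      have h2 : (((q.1 - p.1).natAbs : ℕ) : ℤ) ≤ (m:ℤ) := by
        rw [Int.natCast_natAbs]
        refine abs_le.mpr ⟨by linarith [hgp.1.1, hgp.1.2, hgq.1.1, hgq.1.2],
          by linarith [hgp.1.1, hgp.1.2, hgq.1.1, hgq.1.2]⟩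
      have h3 : (((q.1 - p.1).natAbs : ℕ) : ℝ) ≤ (m:ℝ) := by exact_mod_cast h2
      have hτ : (((q.1 - p.1).natAbs.divisors.card : ℕ) : ℝ) ≤ C * (m:ℝ) ^ δ := by
        refine (hC _ hΔ0').trans ?_
        exact mul_le_mul_of_nonneg_left
          (Real.rpow_le_rpow (by positivity) h3 hδ.le) (by linarith)
      have hlog1 : Real.log m ≤ (m:ℝ) ^ δ / δ := Real.log_le_rpow_div hm0.le hδ
      have hlog : 1 + Real.log m ≤ (1 + 1/δ) * (m:ℝ) ^ δ := by
        calc 1 + Real.log m ≤ (m:ℝ) ^ δ + (m:ℝ) ^ δ / δ := add_le_add hE1 hlog1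
          _ = (1 + 1/δ) * (m:ℝ) ^ δ := by field_simp
      have hlog0 : (0:ℝ) ≤ 1 + Real.log m := by
        have := Real.log_nonneg hm1r; linarith
      have step1 : (((q.1 - p.1).natAbs.divisors.card : ℕ) : ℝ) * (2 * (1 + Real.log m))
          ≤ (C * (m:ℝ) ^ δ) * (2 * ((1 + 1/δ) * (m:ℝ) ^ δ)) := by
        refine mul_le_mul hτ ?_ (by linarith) (by positivity)
        linarith
      calc (m:ℝ) + 2 * m * ((((q.1 - p.1).natAbs.divisors.card : ℕ) : ℝ) * (2 * (1 + Real.log m)))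
          ≤ (m:ℝ) ^ ((1:ℝ) + ε/2) + 2 * m * ((C * (m:ℝ) ^ δ) * (2 * ((1 + 1/δ) * (m:ℝ) ^ δ))) := by
            refine add_le_add hMle (mul_le_mul_of_nonneg_left step1 (by positivity))
        _ = (1 + 4 * C * (1 + 1/δ)) * ((m:ℝ) ^ ((1:ℝ) + ε/2)) := by rw [heq]; ring
        _ ≤ C₂ * (m:ℝ) ^ ((1:ℝ) + ε/2) := by
            refine mul_le_mul_of_nonneg_right (by rw [hC₂def]; nlinarith) (by positivity)
  refine hmain.trans ?_
  calc C₂ * (m:ℝ) ^ ((1:ℝ) + ε/2) ≤ (m:ℝ) ^ (ε/2) * (m:ℝ) ^ ((1:ℝ) + ε/2) := by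
        exact mul_le_mul_of_nonneg_right hC₂m (by positivity)
    _ = (m:ℝ) ^ ((1:ℝ) + ε) := by
        rw [← Real.rpow_add hm0]
        ring_nf
end

section
/- Let G be a finite simple graph on N vertices, let D ≥ 1 and C ≥ 1 be reals, and let s ≥ 2 be an integer. Suppose every vertex of G has degree at most D and every pair of distinct vertices of G has at most C common neighbors. Then the number of s-element subsets of the vertex set of G that induce a clique in G is at most N · D · C^(s−2). -/
open Finset

lemma base_case (V : Type) [Fintype V] [DecidableEq V]
    (G : SimpleGraph V) [DecidableRel G.Adj]
    (D : ℝ) (hdeg : ∀ v : V, (G.degree v : ℝ) ≤ D) :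
    ((G.cliqueFinset 2).card : ℝ) ≤ (Fintype.card V : ℝ) * D := by
  have hsub : G.cliqueFinset 2 ⊆
      Finset.univ.biUnion (fun v => (G.neighborFinset v).image (fun u => {v, u})) := by
    intro S hS
    rw [SimpleGraph.mem_cliqueFinset_iff] at hS
    obtain ⟨a, b, hab, rfl⟩ := Finset.card_eq_two.mp hS.card_eq
    have hadj : G.Adj a b := hS.isClique (by simp) (by simp) hab
    simp only [Finset.mem_biUnion, Finset.mem_univ, Finset.mem_image, true_and]
    exact ⟨a, b, by simpa using hadj, rfl⟩
  have h1 : (G.cliqueFinset 2).card ≤ ∑ v : V, (G.degree v) := by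
    refine le_trans (Finset.card_le_card hsub) (le_trans Finset.card_biUnion_le ?_)
    apply Finset.sum_le_sum
    intro v _
    simpa [SimpleGraph.card_neighborFinset_eq_degree] using
      Finset.card_image_le (s := G.neighborFinset v) (f := fun u => ({v, u} : Finset V))
  calc ((G.cliqueFinset 2).card : ℝ) ≤ ∑ v : V, (G.degree v : ℝ) := by
        push_cast
        exact_mod_cast h1
  _ ≤ ∑ _v : V, D := Finset.sum_le_sum (fun v _ => hdeg v)
  _ = (Fintype.card V : ℝ) * D := by simp [mul_comm]

lemma step_case (V : Type) [Fintype V] [DecidableEq V]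
    (G : SimpleGraph V) [DecidableRel G.Adj]
    (C : ℝ) (hC : 0 ≤ C) (s : ℕ) (hs : 2 ≤ s)
    (hcommon : ∀ u v : V, u ≠ v →
      (((G.neighborFinset u) ∩ (G.neighborFinset v)).card : ℝ) ≤ C) :
    ((G.cliqueFinset (s + 1)).card : ℝ) ≤ ((G.cliqueFinset s).card : ℝ) * C := by
  classical
  have hsub : G.cliqueFinset (s + 1) ⊆
      (G.cliqueFinset s).biUnion (fun T =>
        (Finset.univ.filter (fun v => ∀ u ∈ T, G.Adj v u)).image (fun v => insert v T)) := by
    intro S hS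
    rw [SimpleGraph.mem_cliqueFinset_iff] at hS
    have hne : S.Nonempty := by
      rw [← Finset.card_pos, hS.card_eq]; omega
    obtain ⟨v, hv⟩ := hne
    have hT : (S.erase v) ∈ G.cliqueFinset s := by
      rw [SimpleGraph.mem_cliqueFinset_iff]
      constructor
      · exact hS.isClique.subset (by intro x hx; exact Finset.mem_of_mem_erase hx)
      · rw [Finset.card_erase_of_mem hv, hS.card_eq]
        omega
    refine Finset.mem_biUnion.mpr ⟨S.erase v, hT, Finset.mem_image.mpr ⟨v, ?_, ?_⟩⟩
    · simp only [Finset.mem_filter, Finset.mem_univ, true_and]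
      intro u hu
      exact hS.isClique hv (Finset.mem_of_mem_erase hu) (Finset.ne_of_mem_erase hu).symm
    · exact Finset.insert_erase hv
  have hfilter : ∀ T ∈ G.cliqueFinset s,
      ((Finset.univ.filter (fun v => ∀ u ∈ T, G.Adj v u)).card : ℝ) ≤ C := by
    intro T hT
    rw [SimpleGraph.mem_cliqueFinset_iff] at hT
    have h2 : 1 < T.card := by rw [hT.card_eq]; omega
    obtain ⟨a, ha, b, hb, hab⟩ := Finset.one_lt_card.mp h2
    have hsub2 : Finset.univ.filter (fun v => ∀ u ∈ T, G.Adj v u) ⊆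
        G.neighborFinset a ∩ G.neighborFinset b := by
      intro v hv
      simp only [Finset.mem_filter, Finset.mem_univ, true_and] at hv
      simp only [Finset.mem_inter, SimpleGraph.mem_neighborFinset]
      exact ⟨(hv a ha).symm, (hv b hb).symm⟩
    exact le_trans (by exact_mod_cast Finset.card_le_card hsub2) (hcommon a b hab)
  have h1 : (G.cliqueFinset (s + 1)).card ≤
      ∑ T ∈ G.cliqueFinset s,
        ((Finset.univ.filter (fun v => ∀ u ∈ T, G.Adj v u)).image (fun v => insert v T)).card :=
    le_trans (Finset.card_le_card hsub) Finset.card_biUnion_le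
  calc ((G.cliqueFinset (s + 1)).card : ℝ)
      ≤ ∑ T ∈ G.cliqueFinset s,
        (((Finset.univ.filter (fun v => ∀ u ∈ T, G.Adj v u)).image (fun v => insert v T)).card : ℝ) := by
        exact_mod_cast h1
  _ ≤ ∑ T ∈ G.cliqueFinset s, C := by
      apply Finset.sum_le_sum
      intro T hT
      exact le_trans (by exact_mod_cast Finset.card_image_le) (hfilter T hT)
  _ = ((G.cliqueFinset s).card : ℝ) * C := by simp [mul_comm]

theorem clique_count_bound (V : Type) [Fintype V] [DecidableEq V]
    (G : SimpleGraph V) [DecidableRel G.Adj]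
    (N : ℕ) (hN : Fintype.card V = N)
    (D C : ℝ) (hD : 1 ≤ D) (hC : 1 ≤ C) (s : ℕ) (hs : 2 ≤ s)
    (hdeg : ∀ v : V, (G.degree v : ℝ) ≤ D)
    (hcommon : ∀ u v : V, u ≠ v →
      (((G.neighborFinset u) ∩ (G.neighborFinset v)).card : ℝ) ≤ C) :
    ((G.cliqueFinset s).card : ℝ) ≤ (N : ℝ) * D * C ^ (s - 2) := by
  obtain ⟨n, rfl⟩ : ∃ n, s = n + 2 := ⟨s - 2, by omega⟩
  subst hN
  induction n with
  | zero => simpa using base_case V G D hdeg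
  | succ n ih =>
    have hstep := step_case V G C (le_trans zero_le_one hC) (n + 2) (by omega) hcommon
    have ih' := ih (by omega)
    calc ((G.cliqueFinset (n + 1 + 2)).card : ℝ)
        ≤ ((G.cliqueFinset (n + 2)).card : ℝ) * C := hstep
    _ ≤ ((Fintype.card V : ℝ) * D * C ^ (n + 2 - 2)) * C := by
        apply mul_le_mul_of_nonneg_right ih' (le_trans zero_le_one hC)
    _ = (Fintype.card V : ℝ) * D * C ^ (n + 1 + 2 - 2) := by
        have : n + 2 - 2 = n := by omega
        have h2 : n + 1 + 2 - 2 = n + 1 := by omega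
        rw [this, h2]; ring
end

section
/- For every integer s ≥ 3 and every real ε > 0 there exists m₀ such that for all integers m ≥ m₀ the following holds: with P = {(a,b) ∈ ℤ × ℤ : 0 ≤ a < m, 0 ≤ b < m²} and L the family of lines {(x,y) : y = a·x + b} for integers 0 ≤ a < m, 0 ≤ b < m², the number of s-element subsets S of P such that every pair of distinct points of S lies on a common line of L is at most m^(3 + s + ε). -/
open scoped Classical

set_option linter.unusedVariables false
set_option maxHeartbeats 1000000

lemma prime_pow_factor_bound (δ : ℝ) (hδ : 0 < δ) (p a : ℕ) (hp : p.Prime) :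
    (a + 1 : ℝ) ≤ (if (p:ℝ) ^ δ < 2 then (1 + 1/(δ * Real.log 2)) else 1)
      * ((p:ℝ) ^ a) ^ δ := by
  have hp2 : (2:ℝ) ≤ (p:ℝ) := by exact_mod_cast hp.two_le
  have hppos : (0:ℝ) < p := by linarith
  have hpa : ((p:ℝ) ^ a) ^ δ = ((p:ℝ) ^ δ) ^ a := by
    rw [← Real.rpow_natCast ((p:ℝ)^δ) a, ← Real.rpow_natCast (p:ℝ) a,
      ← Real.rpow_mul hppos.le, ← Real.rpow_mul hppos.le, mul_comm]
  rw [hpa]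
  have hpd : (0:ℝ) < (p:ℝ) ^ δ := Real.rpow_pos_of_pos hppos δ
  have h2dle : ((2:ℝ) ^ δ) ^ a ≤ ((p:ℝ) ^ δ) ^ a := by
    apply pow_le_pow_left₀ (by positivity)
    exact Real.rpow_le_rpow (by norm_num) hp2 hδ.le
  split_ifs with h
  · -- small prime case
    have hlog2 : (0:ℝ) < Real.log 2 := Real.log_pos (by norm_num)
    set t : ℝ := δ * Real.log 2 with ht
    have htpos : 0 < t := mul_pos hδ hlog2
    have h2d : ((2:ℝ) ^ δ) ^ a = Real.exp (t * a) := by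
      rw [← Real.exp_log (x := (2:ℝ)^δ) (Real.rpow_pos_of_pos (by norm_num) δ),
        ← Real.exp_nat_mul, Real.log_rpow (by norm_num), ht]
      ring_nf
    have key : (a + 1 : ℝ) ≤ (1 + 1/t) * ((2:ℝ) ^ δ) ^ a := by
      rw [h2d]
      have h1 : t * a + 1 ≤ Real.exp (t * a) := Real.add_one_le_exp _
      have h2 : (1 + 1/t) * (t * a + 1) ≤ (1 + 1/t) * Real.exp (t * a) := by
        apply mul_le_mul_of_nonneg_left h1; positivity
      refine le_trans ?_ h2
      have expand : (1+1/t)*(t*(a:ℝ)+1) = t*(a:ℝ) + 1/t + ((a:ℝ) + 1) := by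
        field_simp; ring
      rw [expand]
      have h3 : (0:ℝ) ≤ t * a := by positivity
      have h4 : (0:ℝ) ≤ 1/t := by positivity
      linarith
    refine key.trans ?_
    exact mul_le_mul_of_nonneg_left h2dle (by positivity)
  · -- large prime case
    rw [one_mul]
    have h2a : (a + 1 : ℝ) ≤ (2:ℝ) ^ a := by
      have : a < 2 ^ a := Nat.lt_two_pow_self
      exact_mod_cast Nat.succ_le_of_lt this
    push_neg at h
    calc (a+1:ℝ) ≤ (2:ℝ)^a := h2a
    _ ≤ ((p:ℝ)^δ)^a := pow_le_pow_left₀ (by norm_num) h a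


lemma tau_le_rpow (δ : ℝ) (hδ : 0 < δ) :
    ∃ C : ℝ, 1 ≤ C ∧ ∀ n : ℕ, n ≠ 0 → (n.divisors.card : ℝ) ≤ C * (n : ℝ) ^ δ := by
  have hlog2 : (0:ℝ) < Real.log 2 := Real.log_pos (by norm_num)
  have hB1 : 1 ≤ 1 + 1/(δ * Real.log 2) := by
    have : 0 < 1/(δ * Real.log 2) := by positivity
    linarith
  set B : ℝ := 1 + 1/(δ * Real.log 2) with hB
  set N₀ : ℕ := ⌈(2:ℝ) ^ (1/δ)⌉₊ + 1 with hN₀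
  refine ⟨B ^ N₀, one_le_pow₀ hB1, ?_⟩
  intro n hn
  have hcd : (n.divisors.card : ℝ) = ∏ p ∈ n.primeFactors, ((n.factorization p : ℝ) + 1) := by
    rw [Nat.card_divisors hn]; push_cast; rfl
  rw [hcd]
  have hstep : ∏ p ∈ n.primeFactors, ((n.factorization p : ℝ) + 1)
      ≤ ∏ p ∈ n.primeFactors,
        ((if (p:ℝ) ^ δ < 2 then B else 1) * ((p:ℝ) ^ (n.factorization p)) ^ δ) := by
    apply Finset.prod_le_prod
    · intro p _; positivity
    · intro p hp
      exact prime_pow_factor_bound δ hδ p _ (Nat.prime_of_mem_primeFactors hp)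
  refine hstep.trans ?_
  rw [Finset.prod_mul_distrib]
  have hr : ∏ p ∈ n.primeFactors, ((p:ℝ) ^ (n.factorization p)) ^ δ = (n:ℝ) ^ δ := by
    rw [Real.finset_prod_rpow _ _ (fun i _ => by positivity)]
    congr 1
    have hc : ∏ p ∈ n.primeFactors, ((p:ℝ) ^ n.factorization p)
        = ((∏ p ∈ n.primeFactors, p ^ n.factorization p : ℕ) : ℝ) := by push_cast; rfl
    rw [hc]
    congr 1
    conv_rhs => rw [← Nat.factorization_prod_pow_eq_self hn]
    rw [Finsupp.prod, Nat.support_factorization]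
  rw [hr]
  apply mul_le_mul_of_nonneg_right ?_ (by positivity)
  -- ∏ ite ≤ B ^ N₀
  calc ∏ p ∈ n.primeFactors, (if (p:ℝ) ^ δ < 2 then B else 1)
      = (∏ p ∈ n.primeFactors.filter (fun p : ℕ => (p:ℝ) ^ δ < 2), B)
        * ∏ p ∈ n.primeFactors.filter (fun p : ℕ => ¬ (p:ℝ) ^ δ < 2), (1:ℝ) := by
        rw [← Finset.prod_filter_mul_prod_filter_not n.primeFactors (fun p : ℕ => (p:ℝ) ^ δ < 2)]
        congr 1
        · exact Finset.prod_congr rfl fun p hp => if_pos (Finset.mem_filter.mp hp).2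
        · exact Finset.prod_congr rfl fun p hp => if_neg (Finset.mem_filter.mp hp).2
    _ = B ^ (n.primeFactors.filter (fun p : ℕ => (p:ℝ) ^ δ < 2)).card := by
        rw [Finset.prod_const, Finset.prod_const_one, mul_one]
    _ ≤ B ^ N₀ := by
        apply pow_le_pow_right₀ hB1
        have hsub : n.primeFactors.filter (fun p : ℕ => (p:ℝ) ^ δ < 2) ⊆ Finset.range N₀ := by
          intro p hp
          rw [Finset.mem_filter] at hp
          rw [Finset.mem_range, hN₀]
          have hple : (p:ℝ) < 2 ^ (1/δ) := by
            have h1 : ((p:ℝ) ^ δ) ^ (1/δ) < 2 ^ (1/δ) := by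
              apply Real.rpow_lt_rpow (by positivity) hp.2 (by positivity)
            rwa [← Real.rpow_mul (Nat.cast_nonneg p), mul_one_div, div_self hδ.ne',
              Real.rpow_one] at h1
          have : (p:ℕ) ≤ ⌈(2:ℝ) ^ (1/δ)⌉₊ := by
            exact_mod_cast Nat.le_ceil _ |>.trans' hple.le |> fun h => Nat.cast_le.mp
              (le_trans hple.le (Nat.le_ceil _))
          omega
        calc (n.primeFactors.filter (fun p : ℕ => (p:ℝ) ^ δ < 2)).card
            ≤ (Finset.range N₀).card := Finset.card_le_card hsub
          _ = N₀ := Finset.card_range N₀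


lemma cong_count (m : ℕ) (d u c : ℤ) (hd : 0 < d) :
    (((Finset.Ico (0:ℤ) (m:ℤ)).filter fun a => d ∣ (a * u - c)).card : ℤ) * d
      ≤ (m:ℤ) * Int.gcd u d + d := by
  set A := (Finset.Ico (0:ℤ) (m:ℤ)).filter fun a => d ∣ (a * u - c) with hA
  rcases A.eq_empty_or_nonempty with he | ⟨a₀, ha₀⟩
  · rw [he]; simp; positivity
  · rw [hA, Finset.mem_filter, Finset.mem_Ico] at ha₀
    obtain ⟨⟨ha₀0, ha₀m⟩, ha₀d⟩ := ha₀
    have hm1 : (1:ℤ) ≤ m := by linarith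
    set g : ℤ := (Int.gcd u d : ℤ) with hg
    have hgpos : 0 < g := by
      rw [hg]; exact_mod_cast Int.gcd_pos_of_ne_zero_right u hd.ne'
    have hgd : g ∣ d := Int.gcd_dvd_right u d
    have hgu : g ∣ u := Int.gcd_dvd_left u d
    set q : ℤ := d / g with hq
    have hdq : d = q * g := (Int.ediv_mul_cancel hgd).symm
    have hqpos : 0 < q := by
      rcases lt_trichotomy q 0 with h | h | h
      · nlinarith
      · rw [h] at hdq; simp at hdq; omega
      · exact h
    set r : ℤ := a₀ % q with hr
    have hr0 : 0 ≤ r := Int.emod_nonneg a₀ hqpos.ne'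
    have hrq : r < q := Int.emod_lt_of_pos a₀ hqpos
    have hqar : ∀ a ∈ A, q ∣ (a - r) := by
      intro a ha
      rw [hA, Finset.mem_filter, Finset.mem_Ico] at ha
      have h1 : d ∣ (a - a₀) * u := by
        have : (a - a₀) * u = (a * u - c) - (a₀ * u - c) := by ring
        rw [this]; exact dvd_sub ha.2 ha₀d
      have h2 : q ∣ (a - a₀) * (u / g) := by
        have hug' : (u / g) * g = u := Int.ediv_mul_cancel hgu
        have hkey : ((a - a₀) * (u / g)) * g = (a - a₀) * u := by
          rw [mul_assoc, hug']
        rw [← hkey, hdq] at h1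
        exact (mul_dvd_mul_iff_right hgpos.ne').mp h1
      have hcop : IsCoprime q (u / g) := by
        rw [Int.isCoprime_iff_gcd_eq_one, Int.gcd_comm]
        exact Int.gcd_div_gcd_div_gcd (Int.gcd_pos_of_ne_zero_right u hd.ne')
      have h3 : q ∣ (a - a₀) := hcop.dvd_of_dvd_mul_right h2
      have h4 : q ∣ (a₀ - r) := Int.dvd_self_sub_of_emod_eq rfl
      have : a - r = (a - a₀) + (a₀ - r) := by ring
      rw [this]; exact dvd_add h3 h4
    -- injection into Ico 0 ((m-1)/q + 1)
    have hcard : A.card ≤ (Finset.Ico (0:ℤ) (((m:ℤ)-1)/q + 1)).card := by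
      apply Finset.card_le_card_of_injOn (fun a => (a - r)/q)
      · intro a ha
        have hmem := ha
        rw [hA, Finset.mem_coe, Finset.mem_filter, Finset.mem_Ico] at hmem
        have hdvd := hqar a ha
        have har0 : 0 ≤ a - r := by
          by_contra hneg
          push_neg at hneg
          have : a - r = 0 := by
            refine Int.eq_zero_of_abs_lt_dvd hdvd ?_
            rw [abs_of_neg hneg]; omega
          omega
        simp only [Finset.mem_coe, Finset.mem_Ico]
        constructor
        · exact Int.ediv_nonneg har0 hqpos.le
        · have : (a - r)/q ≤ ((m:ℤ)-1)/q := by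
            apply Int.ediv_le_ediv hqpos; omega
          omega
      · intro a1 h1 a2 h2 heq
        simp only at heq
        have e1 : a1 - r = q * ((a1 - r)/q) := by
          rw [mul_comm]; exact (Int.ediv_mul_cancel (hqar a1 h1)).symm
        have e2 : a2 - r = q * ((a2 - r)/q) := by
          rw [mul_comm]; exact (Int.ediv_mul_cancel (hqar a2 h2)).symm
        have : a1 - r = a2 - r := by rw [e1, e2, heq]
        omega
    have hc2 : (A.card : ℤ) ≤ ((m:ℤ)-1)/q + 1 := by
      rw [Int.card_Ico] at hcard
      have hnn : (0:ℤ) ≤ ((m:ℤ)-1)/q + 1 := by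
        have : (0:ℤ) ≤ ((m:ℤ)-1)/q := Int.ediv_nonneg (by omega) hqpos.le
        omega
      calc (A.card : ℤ) ≤ ((((m:ℤ)-1)/q + 1 - 0).toNat : ℤ) := by exact_mod_cast hcard
        _ = ((m:ℤ)-1)/q + 1 := by rw [sub_zero, Int.toNat_of_nonneg hnn]
    calc (A.card : ℤ) * d ≤ (((m:ℤ)-1)/q + 1) * d := by
          apply mul_le_mul_of_nonneg_right hc2 hd.le
      _ = (((m:ℤ)-1)/q * q) * g + d := by rw [hdq]; ring
      _ ≤ ((m:ℤ)-1) * g + d := by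
          have h5 : ((m:ℤ)-1)/q * q ≤ (m:ℤ)-1 := Int.ediv_mul_le _ hqpos.ne'
          nlinarith
      _ ≤ (m:ℤ) * g + d := by nlinarith


lemma gcd_sum_le (m : ℕ) (e : ℤ) (he : 1 ≤ e) :
    ∑ d ∈ Finset.Ico (1:ℤ) ((m:ℤ)+1), (Int.gcd e d : ℝ) / (d:ℝ)
      ≤ (e.toNat.divisors.card : ℝ) * ∑ j ∈ Finset.Icc 1 m, (1/(j:ℝ)) := by
  set D := Finset.Ico (1:ℤ) ((m:ℤ)+1) with hD
  set ι : ℤ → ℕ × ℕ := fun d => (Int.gcd e d, (d / (Int.gcd e d : ℤ)).toNat) with hι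
  have hfact : ∀ d ∈ D, 0 < d ∧ 0 < Int.gcd e d ∧ d = (Int.gcd e d : ℤ) * ((d / (Int.gcd e d : ℤ))) ∧ 1 ≤ d / (Int.gcd e d : ℤ) ∧ d / (Int.gcd e d : ℤ) ≤ d := by
    intro d hd
    rw [hD, Finset.mem_Ico] at hd
    have hdpos : 0 < d := hd.1
    have hgpos : 0 < Int.gcd e d := Int.gcd_pos_of_ne_zero_left d (by omega)
    have hgdvd : (Int.gcd e d : ℤ) ∣ d := Int.gcd_dvd_right e d
    have heq : d = (Int.gcd e d : ℤ) * (d / (Int.gcd e d : ℤ)) := (Int.mul_ediv_cancel' hgdvd).symm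
    have hgz : (0:ℤ) < (Int.gcd e d : ℤ) := by exact_mod_cast hgpos
    have hj1 : 1 ≤ d / (Int.gcd e d : ℤ) := by
      rcases lt_or_ge (d / (Int.gcd e d : ℤ)) 1 with h | h
      · nlinarith [heq]
      · exact h
    have hjd : d / (Int.gcd e d : ℤ) ≤ d := by
      nlinarith [heq]
    exact ⟨hdpos, hgpos, heq, hj1, hjd⟩
  have hF : ∀ d ∈ D, (Int.gcd e d : ℝ) / (d:ℝ) = (fun p : ℕ × ℕ => 1/(p.2:ℝ)) (ι d) := by
    intro d hd
    obtain ⟨hdpos, hgpos, heq, hj1, _⟩ := hfact d hd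
    simp only [hι]
    set j : ℤ := d / (Int.gcd e d : ℤ) with hj
    have hjt : ((j.toNat : ℤ)) = j := Int.toNat_of_nonneg (by omega)
    have hgr : ((Int.gcd e d : ℕ):ℝ) ≠ 0 := by
      have : (0:ℝ) < ((Int.gcd e d : ℕ):ℝ) := by exact_mod_cast hgpos
      linarith
    have hjr : (0:ℝ) < ((j:ℤ):ℝ) := by exact_mod_cast hj1.trans_lt' (by norm_num)
    have hdr : (d:ℝ) = ((Int.gcd e d : ℕ):ℝ) * ((j:ℤ):ℝ) := by exact_mod_cast heq
    have hjc : ((j.toNat : ℕ) : ℝ) = ((j:ℤ):ℝ) := by exact_mod_cast hjt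
    rw [hdr, hjc]
    field_simp
  calc ∑ d ∈ D, (Int.gcd e d : ℝ) / (d:ℝ)
      = ∑ d ∈ D, (fun p : ℕ × ℕ => 1/(p.2:ℝ)) (ι d) := Finset.sum_congr rfl hF
    _ = ∑ p ∈ D.image ι, 1/(p.2:ℝ) := by
        rw [Finset.sum_image]
        intro x hx y hy hxy
        obtain ⟨_, _, heqx, _, _⟩ := hfact x hx
        obtain ⟨_, _, heqy, _, _⟩ := hfact y hy
        rw [hι] at hxy
        simp only [Prod.mk.injEq] at hxy
        have h2 : (x / (Int.gcd e x : ℤ)) = (y / (Int.gcd e y : ℤ)) := by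
          have hx0 : 0 ≤ x / (Int.gcd e x : ℤ) := by
            obtain ⟨_, _, _, h, _⟩ := hfact x hx; omega
          have hy0 : 0 ≤ y / (Int.gcd e y : ℤ) := by
            obtain ⟨_, _, _, h, _⟩ := hfact y hy; omega
          omega
        have hc : ((Int.gcd e x : ℕ) : ℤ) = ((Int.gcd e y : ℕ) : ℤ) := by
          exact_mod_cast hxy.1
        rw [heqx, heqy, h2, hc]
    _ ≤ ∑ p ∈ e.toNat.divisors ×ˢ Finset.Icc 1 m, 1/(p.2:ℝ) := by
        apply Finset.sum_le_sum_of_subset_of_nonneg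
        · intro p hp
          rw [Finset.mem_image] at hp
          obtain ⟨d, hd, rfl⟩ := hp
          obtain ⟨hdpos, hgpos, heq, hj1, hjd⟩ := hfact d hd
          rw [Finset.mem_product]
          simp only [hι]
          constructor
          · rw [Nat.mem_divisors]
            refine ⟨?_, by omega⟩
            have h1 : Int.gcd e d ∣ e.natAbs := by
              rw [Int.gcd_def]; exact Nat.gcd_dvd_left _ _
            have h2 : e.natAbs = e.toNat := by omega
            rwa [h2] at h1
          · rw [Finset.mem_Icc]
            rw [hD, Finset.mem_Ico] at hd
            have hdm : d / (Int.gcd e d : ℤ) ≤ (m:ℤ) := le_trans hjd (by omega)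
            omega
        · intro p _ _
          positivity
    _ = (e.toNat.divisors.card : ℝ) * ∑ j ∈ Finset.Icc 1 m, (1/(j:ℝ)) := by
        rw [Finset.sum_product]
        simp [Finset.sum_const, mul_comm]


noncomputable def ExtSet (m : ℕ) (x0 xp c : ℤ) : Finset (ℤ × ℤ) := by
  classical
  exact (Finset.Ico (0:ℤ) (m:ℤ) ×ˢ Finset.Ico (0:ℤ) (m:ℤ)).filter fun v =>
    xp < v.1 ∧ (v.1 - xp) ∣ (v.2 * (v.1 - x0) - c)

lemma int_gcd_shift (e d : ℤ) (he : 0 ≤ e) (hd : 0 ≤ d) :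
    Int.gcd (d + e) d = Int.gcd e d := by
  rw [Int.gcd_def, Int.gcd_def]
  have h1 : (d + e).natAbs = e.natAbs + d.natAbs := by omega
  rw [h1]
  exact Nat.gcd_add_self_left _ _

lemma ext_card_le (m : ℕ) (x0 xp c : ℤ) (h0 : 0 ≤ x0) (h1 : x0 < xp) (h2 : xp < (m:ℤ)) :
    ((ExtSet m x0 xp c).card : ℝ)
      ≤ (m:ℝ) * ((((xp - x0).toNat.divisors.card : ℝ) * ∑ j ∈ Finset.Icc 1 m, (1/(j:ℝ))) + 1) := by
  classical
  set e : ℤ := xp - x0 with he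
  have he1 : 1 ≤ e := by omega
  set inner : ℤ → Finset ℤ :=
    fun x => (Finset.Ico (0:ℤ) (m:ℤ)).filter fun a => (x - xp) ∣ (a * (x - x0) - c) with hinner
  -- step 1 : subset of biUnion
  have hsub : ExtSet m x0 xp c ⊆
      (Finset.Ico (xp+1) (m:ℤ)).biUnion (fun x => (inner x).image (fun a => (x, a))) := by
    intro v hv
    rw [ExtSet, Finset.mem_filter, Finset.mem_product, Finset.mem_Ico, Finset.mem_Ico] at hv
    obtain ⟨⟨⟨hv1, hv2⟩, hv3, hv4⟩, hv5, hv6⟩ := hv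
    rw [Finset.mem_biUnion]
    refine ⟨v.1, by rw [Finset.mem_Ico]; omega, ?_⟩
    rw [Finset.mem_image]
    exact ⟨v.2, by rw [hinner, Finset.mem_filter, Finset.mem_Ico]; exact ⟨⟨hv3, hv4⟩, hv6⟩, rfl⟩
  have hcard1 : (ExtSet m x0 xp c).card ≤ ∑ x ∈ Finset.Ico (xp+1) (m:ℤ), (inner x).card := by
    calc (ExtSet m x0 xp c).card
        ≤ ((Finset.Ico (xp+1) (m:ℤ)).biUnion (fun x => (inner x).image (fun a => (x, a)))).card :=
          Finset.card_le_card hsub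
      _ ≤ ∑ x ∈ Finset.Ico (xp+1) (m:ℤ), ((inner x).image (fun a => (x, a))).card :=
          Finset.card_biUnion_le
      _ ≤ ∑ x ∈ Finset.Ico (xp+1) (m:ℤ), (inner x).card :=
          Finset.sum_le_sum fun x _ => Finset.card_image_le
  -- step 2 : per-x bound in ℝ
  have hstep2 : ∀ x ∈ Finset.Ico (xp+1) (m:ℤ),
      ((inner x).card : ℝ) ≤ (m:ℝ) * (Int.gcd e (x - xp) : ℝ) / ((x - xp) : ℝ) + 1 := by
    intro x hx
    rw [Finset.mem_Ico] at hx
    have hd : (0:ℤ) < x - xp := by omega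
    have hdr : (0:ℝ) < ((x - xp : ℤ) : ℝ) := by exact_mod_cast hd
    have hgeq : Int.gcd (x - x0) (x - xp) = Int.gcd e (x - xp) := by
      have hxx : x - x0 = (x - xp) + e := by omega
      rw [hxx]
      exact int_gcd_shift e (x - xp) (by omega) (by omega)
    have hc := cong_count m (x - xp) (x - x0) c hd
    rw [hgeq] at hc
    have hcr : ((inner x).card : ℝ) * ((x - xp : ℤ):ℝ)
        ≤ (m:ℝ) * (Int.gcd e (x - xp) : ℝ) + ((x - xp : ℤ):ℝ) := by exact_mod_cast hc
    have hBpos : (0:ℝ) < (x:ℝ) - (xp:ℝ) := by push_cast at hdr; linarith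
    have heq2 : (m:ℝ) * (Int.gcd e (x - xp) : ℝ) / ((x:ℝ) - (xp:ℝ)) + 1
        = ((m:ℝ) * (Int.gcd e (x - xp) : ℝ) + ((x:ℝ) - (xp:ℝ))) / ((x:ℝ) - (xp:ℝ)) := by
      field_simp
    rw [heq2, le_div_iff₀ hBpos]
    push_cast at hcr ⊢
    linarith
  -- step 3 : reindex and extend
  have hstep3 : ∑ x ∈ Finset.Ico (xp+1) (m:ℤ), ((m:ℝ) * (Int.gcd e (x - xp) : ℝ) / ((x - xp):ℝ) + 1)
      ≤ ∑ d ∈ Finset.Ico (1:ℤ) ((m:ℤ)+1), ((m:ℝ) * (Int.gcd e d : ℝ) / (d:ℝ) + 1) := by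
    have hmap : Finset.Ico (xp+1) (m:ℤ)
        = Finset.map (addLeftEmbedding xp) (Finset.Ico (1:ℤ) ((m:ℤ) - xp)) := by
      rw [Finset.map_add_left_Ico]
      congr 1 <;> omega
    rw [hmap, Finset.sum_map]
    have hsimp : ∀ d ∈ Finset.Ico (1:ℤ) ((m:ℤ) - xp),
        ((m:ℝ) * (Int.gcd e (addLeftEmbedding xp d - xp) : ℝ) / ((addLeftEmbedding xp d - xp):ℝ) + 1)
        = ((m:ℝ) * (Int.gcd e d : ℝ) / (d:ℝ) + 1) := by
      intro d _
      have h1 : addLeftEmbedding xp d = xp + d := rfl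
      rw [h1, show xp + d - xp = d by ring]
      push_cast
      ring_nf
    rw [Finset.sum_congr rfl hsimp]
    apply Finset.sum_le_sum_of_subset_of_nonneg
    · apply Finset.Ico_subset_Ico le_rfl; omega
    · intro d hd _
      rw [Finset.mem_Ico] at hd
      have : (0:ℝ) < (d:ℝ) := by exact_mod_cast hd.1.trans_lt' (by norm_num)
      positivity
  -- step 4 : split the sum
  have hstep4 : ∑ d ∈ Finset.Ico (1:ℤ) ((m:ℤ)+1), ((m:ℝ) * (Int.gcd e d : ℝ) / (d:ℝ) + 1)
      = (m:ℝ) * (∑ d ∈ Finset.Ico (1:ℤ) ((m:ℤ)+1), (Int.gcd e d : ℝ) / (d:ℝ)) + m := by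
    rw [Finset.sum_add_distrib, Finset.mul_sum]
    congr 1
    · apply Finset.sum_congr rfl; intro d _; ring
    · rw [Finset.sum_const, Int.card_Ico]
      have : ((m:ℤ) + 1 - 1).toNat = m := by omega
      rw [this]; simp
  -- combine
  have hfinal : ((ExtSet m x0 xp c).card : ℝ)
      ≤ (m:ℝ) * (∑ d ∈ Finset.Ico (1:ℤ) ((m:ℤ)+1), (Int.gcd e d : ℝ) / (d:ℝ)) + m := by
    calc ((ExtSet m x0 xp c).card : ℝ)
        ≤ ∑ x ∈ Finset.Ico (xp+1) (m:ℤ), ((inner x).card : ℝ) := by exact_mod_cast hcard1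
      _ ≤ ∑ x ∈ Finset.Ico (xp+1) (m:ℤ), ((m:ℝ) * (Int.gcd e (x - xp) : ℝ) / ((x - xp):ℝ) + 1) :=
          Finset.sum_le_sum hstep2
      _ ≤ _ := hstep3.trans_eq hstep4
  refine hfinal.trans ?_
  have hg := gcd_sum_le m e he1
  have hm0 : (0:ℝ) ≤ (m:ℝ) := Nat.cast_nonneg m
  nlinarith [hg]


lemma ext_uniform (ε' : ℝ) (hε' : 0 < ε') :
    ∃ m₀ : ℕ, 2 ≤ m₀ ∧ ∀ m : ℕ, m₀ ≤ m → ∀ E : ℕ, 1 ≤ E → E ≤ m →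
      (m:ℝ) * (((E.divisors.card : ℝ) * ∑ j ∈ Finset.Icc 1 m, (1/(j:ℝ))) + 1)
        ≤ (m:ℝ) ^ ((1:ℝ) + ε') := by
  set δ : ℝ := ε'/3 with hδdef
  have hδ : 0 < δ := by positivity
  obtain ⟨C, hC1, hC⟩ := tau_le_rpow δ hδ
  set C₂ : ℝ := C + C/δ + 1 with hC₂def
  have hC₂pos : 0 < C₂ := by positivity
  have hC₂1 : 1 ≤ C₂ := by
    have h : 0 ≤ C/δ := by positivity
    rw [hC₂def]; linarith
  refine ⟨max 2 (⌈C₂ ^ (1/δ)⌉₊ + 1), le_max_left _ _, ?_⟩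
  intro m hm E hE1 hEm
  have hm2 : 2 ≤ m := le_trans (le_max_left _ _) hm
  have hmpos : (0:ℝ) < m := by positivity
  have hm1 : (1:ℝ) ≤ m := by exact_mod_cast Nat.one_le_of_lt hm2
  -- m^δ ≥ C₂
  have hmC₂ : C₂ ≤ (m:ℝ) ^ δ := by
    have h1 : C₂ ^ (1/δ) ≤ (m:ℝ) := by
      have h2 : (⌈C₂ ^ (1/δ)⌉₊ : ℝ) ≤ m := by
        have : ⌈C₂ ^ (1/δ)⌉₊ + 1 ≤ m := le_trans (le_max_right _ _) hm
        exact_mod_cast (by omega : ⌈C₂ ^ (1/δ)⌉₊ ≤ m)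
      exact le_trans (Nat.le_ceil _) h2
    calc C₂ = (C₂ ^ (1/δ)) ^ δ := by
          rw [← Real.rpow_mul hC₂pos.le, one_div, inv_mul_cancel₀ hδ.ne', Real.rpow_one]
      _ ≤ (m:ℝ) ^ δ := Real.rpow_le_rpow (by positivity) h1 hδ.le
  -- harmonic bound
  have hH : ∑ j ∈ Finset.Icc 1 m, (1/(j:ℝ)) ≤ 1 + Real.log m := by
    have h1 : ((harmonic m : ℚ) : ℝ) = ∑ j ∈ Finset.Icc 1 m, (1/(j:ℝ)) := by
      rw [harmonic_eq_sum_Icc]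
      push_cast
      simp [one_div]
    rw [← h1]
    exact harmonic_le_one_add_log m
  have hlog : Real.log m ≤ (m:ℝ) ^ δ / δ := by
    have h1 : Real.log ((m:ℝ) ^ δ) = δ * Real.log m := Real.log_rpow hmpos δ
    have h2 : Real.log ((m:ℝ) ^ δ) ≤ (m:ℝ) ^ δ - 1 := by
      have := Real.log_le_sub_one_of_pos (Real.rpow_pos_of_pos hmpos δ)
      linarith
    rw [h1] at h2
    rw [le_div_iff₀ hδ]
    nlinarith [Real.rpow_pos_of_pos hmpos δ]
  -- tau bound
  have htau : (E.divisors.card : ℝ) ≤ C * (m:ℝ) ^ δ := by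
    calc (E.divisors.card : ℝ) ≤ C * (E:ℝ) ^ δ := hC E (by omega)
      _ ≤ C * (m:ℝ) ^ δ := by
          apply mul_le_mul_of_nonneg_left _ (by linarith)
          apply Real.rpow_le_rpow (by positivity) (by exact_mod_cast hEm) hδ.le
  have hmd1 : (1:ℝ) ≤ (m:ℝ) ^ δ := by
    rw [show (1:ℝ) = 1 ^ δ by rw [Real.one_rpow]]
    exact Real.rpow_le_rpow zero_le_one hm1 hδ.le
  set X : ℝ := (m:ℝ) ^ δ with hX
  have hXpos : 0 < X := Real.rpow_pos_of_pos hmpos δ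
  have hHnn : 0 ≤ ∑ j ∈ Finset.Icc 1 m, (1/(j:ℝ)) := by positivity
  have hτnn : (0:ℝ) ≤ (E.divisors.card : ℝ) := by positivity
  have hH2 : ∑ j ∈ Finset.Icc 1 m, (1/(j:ℝ)) ≤ X * (1 + 1/δ) := by
    have : 1 + X/δ ≤ X * (1 + 1/δ) := by
      have : X * (1 + 1/δ) = X + X/δ := by field_simp
      rw [this]; linarith
    linarith
  have hkey : ((E.divisors.card : ℝ) * ∑ j ∈ Finset.Icc 1 m, (1/(j:ℝ))) + 1 ≤ C₂ * X^2 := by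
    have h1 : (E.divisors.card : ℝ) * ∑ j ∈ Finset.Icc 1 m, (1/(j:ℝ))
        ≤ (C * X) * (X * (1 + 1/δ)) := by
      apply mul_le_mul htau hH2 hHnn (by positivity)
    have h2 : (C * X) * (X * (1 + 1/δ)) = (C * (1 + 1/δ)) * X^2 := by ring
    have h3 : (1:ℝ) ≤ X^2 := by nlinarith
    have h4 : C₂ * X^2 = (C * (1+1/δ)) * X^2 + (C/δ - C/δ) * X^2 + X^2 := by
      rw [hC₂def]; ring
    nlinarith [h1]
  have hmain : (m:ℝ) * (((E.divisors.card : ℝ) * ∑ j ∈ Finset.Icc 1 m, (1/(j:ℝ))) + 1)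
      ≤ (m:ℝ) * (X^3) := by
    have h5 : C₂ * X^2 ≤ X * X^2 := by nlinarith
    have h6 : X * X^2 = X^3 := by ring
    have := hkey.trans (h5.trans_eq h6)
    exact mul_le_mul_of_nonneg_left this hmpos.le
  refine hmain.trans ?_
  have h7 : X^3 = (m:ℝ) ^ (3*δ) := by
    rw [hX, ← Real.rpow_natCast ((m:ℝ)^δ) 3, ← Real.rpow_mul hmpos.le]
    norm_num
    rw [mul_comm]
  rw [h7, ← Real.rpow_one_add' hmpos.le (by positivity)]
  apply Real.rpow_le_rpow_of_exponent_le hm1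
  rw [hδdef]; ring_nf
  linarith


noncomputable def coordF (m k : ℕ) (i : ℕ) : Finset (ℤ × ℤ) :=
  if i < k then Finset.Ico 0 (m:ℤ) ×ˢ Finset.Ico 0 (if i = 0 then (m:ℤ)^2 else (m:ℤ))
  else {((0:ℤ),(0:ℤ))}

noncomputable def Codes (m s k : ℕ) (h : 0 < s) : Finset (Fin s → ℤ × ℤ) :=
  (Fintype.piFinset fun i : Fin s => coordF m k (i:ℕ)).filter fun q =>
    (∀ i j : Fin s, (i:ℕ) < (j:ℕ) → (j:ℕ) < k → (q i).1 < (q j).1) ∧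
    (∀ i j : Fin s, (i:ℕ) + 1 = (j:ℕ) → 2 ≤ (j:ℕ) → (j:ℕ) < k →
      ((q j).1 - (q i).1) ∣
        ((q j).2 * ((q j).1 - (q ⟨0, h⟩).1) - (q i).2 * ((q i).1 - (q ⟨0, h⟩).1)))

lemma codes_base (m s : ℕ) (h : 0 < s) (hs2 : 2 ≤ s) :
    (Codes m s 2 h).card ≤ m^5 := by
  have hIm : (Finset.Ico (0:ℤ) (m:ℤ)).card = m := by
    rw [Int.card_Ico]; omega
  have hIm2 : (Finset.Ico (0:ℤ) ((m:ℤ)^2)).card = m^2 := by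
    rw [Int.card_Ico, sub_zero, show ((m:ℤ)^2) = ((m^2 : ℕ) : ℤ) by push_cast; ring,
      Int.toNat_natCast]
  have h0 : (0:ℕ) < s := h
  have h1 : (1:ℕ) < s := by omega
  apply le_trans (Finset.card_le_card_of_injOn
    (fun q => (q ⟨0, h0⟩, q ⟨1, h1⟩))
    (t := (Finset.Ico (0:ℤ) (m:ℤ) ×ˢ Finset.Ico 0 ((m:ℤ)^2)) ×ˢ
          (Finset.Ico (0:ℤ) (m:ℤ) ×ˢ Finset.Ico 0 (m:ℤ))) ?_ ?_)
  · rw [Finset.card_product, Finset.card_product, Finset.card_product, hIm, hIm2]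
    ring_nf
    omega
  · intro q hq
    rw [Finset.mem_coe, Codes, Finset.mem_filter] at hq
    have hpi := Fintype.mem_piFinset.mp hq.1
    have h0' : q ⟨0, h0⟩ ∈ Finset.Ico (0:ℤ) (m:ℤ) ×ˢ Finset.Ico 0 ((m:ℤ)^2) := by
      have := hpi ⟨0, h0⟩; rw [coordF] at this; simpa using this
    have h1' : q ⟨1, h1⟩ ∈ Finset.Ico (0:ℤ) (m:ℤ) ×ˢ Finset.Ico 0 (m:ℤ) := by
      have := hpi ⟨1, h1⟩; rw [coordF] at this; simpa using this
    exact Finset.mem_product.mpr ⟨h0', h1'⟩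
  · intro q1 hq1 q2 hq2 heq
    simp only [Prod.mk.injEq] at heq
    rw [Finset.mem_coe, Codes, Finset.mem_filter] at hq1 hq2
    have hpi1 := Fintype.mem_piFinset.mp hq1.1
    have hpi2 := Fintype.mem_piFinset.mp hq2.1
    funext i
    by_cases hi : (i:ℕ) < 2
    · have hiv : (i:ℕ) = 0 ∨ (i:ℕ) = 1 := by omega
      rcases hiv with hiv | hiv
      · have hieq : i = ⟨0, h0⟩ := by apply Fin.ext; simpa using hiv
        rw [hieq]; exact heq.1
      · have hieq : i = ⟨1, h1⟩ := by apply Fin.ext; simpa using hiv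
        rw [hieq]; exact heq.2
    · have e1 := hpi1 i
      have e2 := hpi2 i
      rw [coordF, if_neg hi] at e1 e2
      rw [Finset.mem_singleton] at e1 e2
      rw [e1, e2]

lemma codes_step (m s k : ℕ) (h : 0 < s) (hk2 : 2 ≤ k) (hks : k < s) (K : ℕ)
    (hK : ∀ x0 xp c : ℤ, 0 ≤ x0 → x0 < xp → xp < (m:ℤ) → (ExtSet m x0 xp c).card ≤ K) :
    (Codes m s (k+1) h).card ≤ K * (Codes m s k h).card := by
  set kF : Fin s := ⟨k, hks⟩ with hkF
  set kP : Fin s := ⟨k-1, by omega⟩ with hkP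
  set z : Fin s := ⟨0, h⟩ with hz
  have hkPv : (kP:ℕ) = k - 1 := rfl
  have hkFv : (kF:ℕ) = k := rfl
  have hzv : (z:ℕ) = 0 := rfl
  have hPneF : kP ≠ kF := by
    intro hcon
    have := congrArg Fin.val hcon
    simp [hkPv, hkFv] at this
    omega
  have hzneF : z ≠ kF := by
    intro hcon
    have := congrArg Fin.val hcon
    simp [hzv, hkFv] at this
    omega
  set φ : (Fin s → ℤ × ℤ) → (Fin s → ℤ × ℤ) :=
    fun q => Function.update q kF ((0:ℤ),(0:ℤ)) with hφ
  -- maps to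
  have hmaps : ∀ q ∈ Codes m s (k+1) h, φ q ∈ Codes m s k h := by
    intro q hq
    rw [Codes, Finset.mem_filter] at hq ⊢
    obtain ⟨hpi, hmono, hdvd⟩ := hq
    have hpi' := Fintype.mem_piFinset.mp hpi
    have hval : ∀ i : Fin s, i ≠ kF → φ q i = q i := by
      intro i hi
      rw [hφ]; exact Function.update_of_ne hi _ _
    refine ⟨?_, ?_, ?_⟩
    · rw [Fintype.mem_piFinset]
      intro i
      by_cases hik : i = kF
      · rw [hik, hφ]
        simp only [Function.update_self]
        rw [coordF, if_neg (by omega : ¬ k < k)]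
        exact Finset.mem_singleton_self _
      · rw [hval i hik]
        have := hpi' i
        have hivk : (i:ℕ) ≠ k := fun hcon => hik (Fin.ext (by rw [hkFv]; exact hcon))
        by_cases hlt : (i:ℕ) < k
        · rw [coordF, if_pos hlt]
          rwa [coordF, if_pos (by omega)] at this
        · rw [coordF, if_neg hlt]
          rwa [coordF, if_neg (by omega)] at this
    · intro i j hij hj
      have hiF : i ≠ kF := fun hcon => by rw [hcon, hkFv] at hij; omega
      have hjF : j ≠ kF := fun hcon => by rw [hcon, hkFv] at hj; omega
      rw [hval i hiF, hval j hjF]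
      exact hmono i j hij (by omega)
    · intro i j hij hj2 hjk
      have hiF : i ≠ kF := fun hcon => by rw [hcon, hkFv] at hij; omega
      have hjF : j ≠ kF := fun hcon => by rw [hcon, hkFv] at hjk; omega
      rw [hval i hiF, hval j hjF, hval z hzneF]
      exact hdvd i j hij hj2 (by omega)
  rw [Finset.card_eq_sum_card_fiberwise hmaps]
  have hfiber : ∀ b ∈ Codes m s k h,
      ((Codes m s (k+1) h).filter (fun q => φ q = b)).card ≤ K := by
    intro b hb
    rw [Codes, Finset.mem_filter] at hb
    obtain ⟨hbpi, hbmono, _⟩ := hb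
    have hbpi' := Fintype.mem_piFinset.mp hbpi
    set x0 : ℤ := (b z).1 with hx0
    set xp : ℤ := (b kP).1 with hxp
    set c : ℤ := (b kP).2 * (xp - x0) with hc
    have hbz : b z ∈ Finset.Ico (0:ℤ) (m:ℤ) ×ˢ Finset.Ico 0 ((m:ℤ)^2) := by
      have := hbpi' z
      rw [coordF, hzv, if_pos (by omega : (0:ℕ) < k), if_pos rfl] at this
      exact this
    have hbP : b kP ∈ Finset.Ico (0:ℤ) (m:ℤ) ×ˢ Finset.Ico 0 (m:ℤ) := by
      have := hbpi' kP
      rw [coordF] at this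
      rw [hkPv, if_pos (by omega), if_neg (by omega)] at this
      exact this
    have hx00 : 0 ≤ x0 := by
      have := (Finset.mem_product.mp hbz).1
      rw [Finset.mem_Ico] at this
      exact this.1
    have hx0p : x0 < xp := by
      apply hbmono z kP (by rw [hzv, hkPv]; omega) (by rw [hkPv]; omega)
    have hxpm : xp < (m:ℤ) := by
      have := (Finset.mem_product.mp hbP).1
      rw [Finset.mem_Ico] at this
      exact this.2
    calc ((Codes m s (k+1) h).filter (fun q => φ q = b)).card
        ≤ (ExtSet m x0 xp c).card := by
          apply Finset.card_le_card_of_injOn (fun q => q kF)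
          · intro q hq
            rw [Finset.mem_coe, Finset.mem_filter] at hq
            obtain ⟨hq1, hq2⟩ := hq
            rw [Codes, Finset.mem_filter] at hq1
            obtain ⟨hpi, hmono, hdvd⟩ := hq1
            have hpi' := Fintype.mem_piFinset.mp hpi
            have hbq : ∀ i : Fin s, i ≠ kF → q i = b i := by
              intro i hi
              rw [← hq2, hφ]
              exact (Function.update_of_ne hi _ _).symm
            have hqF : q kF ∈ Finset.Ico (0:ℤ) (m:ℤ) ×ˢ Finset.Ico 0 (m:ℤ) := by
              have := hpi' kF
              rw [coordF] at this
              rw [hkFv, if_pos (by omega), if_neg (by omega)] at this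
              exact this
            rw [ExtSet, Finset.mem_coe, Finset.mem_filter]
            refine ⟨hqF, ?_, ?_⟩
            · have := hmono kP kF (by rw [hkPv, hkFv]; omega) (by rw [hkFv]; omega)
              rwa [hbq kP hPneF] at this
            · have := hdvd kP kF (by rw [hkPv, hkFv]; omega) (by rw [hkFv]; omega)
                (by rw [hkFv]; omega)
              rwa [hbq kP hPneF, hbq z hzneF] at this
          · intro q1 hq1 q2 hq2 heq
            rw [Finset.mem_coe, Finset.mem_filter] at hq1 hq2
            funext i
            by_cases hik : i = kF
            · rw [hik]; exact heq
            · have e1 : q1 i = b i := by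
                rw [← hq1.2, hφ]; exact (Function.update_of_ne hik _ _).symm
              have e2 : q2 i = b i := by
                rw [← hq2.2, hφ]; exact (Function.update_of_ne hik _ _).symm
              rw [e1, e2]
      _ ≤ K := hK x0 xp c hx00 hx0p hxpm
  calc ∑ b ∈ Codes m s k h, ((Codes m s (k+1) h).filter (fun q => φ q = b)).card
      ≤ ∑ _b ∈ Codes m s k h, K := Finset.sum_le_sum hfiber
    _ = (Codes m s k h).card * K := by rw [Finset.sum_const, smul_eq_mul]
    _ = K * (Codes m s k h).card := mul_comm _ _

lemma codes_all (m s : ℕ) (h : 0 < s) (hs3 : 3 ≤ s) (K : ℕ)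
    (hK : ∀ x0 xp c : ℤ, 0 ≤ x0 → x0 < xp → xp < (m:ℤ) → (ExtSet m x0 xp c).card ≤ K) :
    (Codes m s s h).card ≤ m^5 * K^(s-2) := by
  suffices H : ∀ k, 2 ≤ k → k ≤ s → (Codes m s k h).card ≤ m^5 * K^(k-2) by
    exact H s (by omega) le_rfl
  intro k
  induction k with
  | zero => intro h2 _; omega
  | succ n ih =>
    intro h2 hns
    by_cases hn2 : n < 2
    · have : n = 1 := by omega
      subst this
      have := codes_base m s h (by omega)
      simpa using this
    · push_neg at hn2
      have hstep := codes_step m s n h hn2 (by omega) K hK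
      have hih := ih (by omega) (by omega)
      calc (Codes m s (n+1) h).card ≤ K * (Codes m s n h).card := hstep
        _ ≤ K * (m^5 * K^(n-2)) := Nat.mul_le_mul_left K hih
        _ = m^5 * (K * K^(n-2)) := by ring
        _ = m^5 * K^(n+1-2) := by
            rw [show n+1-2 = (n-2)+1 by omega, pow_succ]
            ring


noncomputable def codeY (S : Finset (ℤ × ℤ)) (t : ℤ) : ℤ :=
  (S.filter (fun p => p.1 = t)).sum Prod.snd

noncomputable def codeX (S : Finset (ℤ × ℤ)) (j : ℕ) : ℤ :=
  ((S.image Prod.fst).sort (· ≤ ·)).getD j 0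

noncomputable def codeOf (s : ℕ) (S : Finset (ℤ × ℤ)) : Fin s → ℤ × ℤ := fun i =>
  if (i:ℕ) = 0 then (codeX S 0, codeY S (codeX S 0))
  else (codeX S i, (codeY S (codeX S i) - codeY S (codeX S 0)) / (codeX S i - codeX S 0))

lemma slope_exact (m : ℕ) (p q : ℤ × ℤ) (hl : onCommonLine m p q) (hne : p.1 ≠ q.1) :
    ∃ a : ℤ, 0 ≤ a ∧ a < (m:ℤ) ∧ q.2 - p.2 = a * (q.1 - p.1)
      ∧ (q.2 - p.2) / (q.1 - p.1) = a := by
  obtain ⟨a, b, ha0, ham, _, _, hp, hq⟩ := hl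
  refine ⟨a, ha0, ham, by rw [hp, hq]; ring, ?_⟩
  rw [show q.2 - p.2 = a * (q.1 - p.1) by rw [hp, hq]; ring]
  exact Int.mul_ediv_cancel a (by intro hc; apply hne; omega)

section CliqueFacts
variable (m s : ℕ) (S : Finset (ℤ × ℤ))

lemma clique_fst_inj
    (hclique : ∀ p ∈ S, ∀ q ∈ S, p ≠ q → onCommonLine m p q) :
    ∀ p ∈ S, ∀ q ∈ S, p.1 = q.1 → p = q := by
  intro p hp q hq hpq
  by_contra hne
  obtain ⟨a, b, _, _, _, _, h1, h2⟩ := hclique p hp q hq hne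
  apply hne
  have : p.2 = q.2 := by rw [h1, h2, hpq]
  exact Prod.ext hpq this

lemma clique_filter_eq
    (hclique : ∀ p ∈ S, ∀ q ∈ S, p ≠ q → onCommonLine m p q) :
    ∀ p ∈ S, S.filter (fun q => q.1 = p.1) = {p} := by
  intro p hp
  ext q
  rw [Finset.mem_filter, Finset.mem_singleton]
  constructor
  · rintro ⟨hq, hq1⟩
    exact clique_fst_inj m S hclique q hq p hp hq1
  · rintro rfl
    exact ⟨hp, rfl⟩

lemma clique_codeY
    (hclique : ∀ p ∈ S, ∀ q ∈ S, p ≠ q → onCommonLine m p q) :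
    ∀ p ∈ S, codeY S p.1 = p.2 := by
  intro p hp
  rw [codeY, clique_filter_eq m S hclique p hp, Finset.sum_singleton]

end CliqueFacts

section SortFacts
variable (s : ℕ) (S : Finset (ℤ × ℤ)) (hcard : S.card = s)
  (hinj : ∀ p ∈ S, ∀ q ∈ S, p.1 = q.1 → p = q)

include hcard hinj

lemma code_img_card : (S.image Prod.fst).card = s := by
  rw [Finset.card_image_of_injOn, hcard]
  intro p hp q hq
  exact hinj p hp q hq

lemma code_sort_len : ((S.image Prod.fst).sort (· ≤ ·)).length = s := by
  rw [Finset.length_sort, code_img_card s S hcard hinj]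

lemma codeX_mem (j : ℕ) (hj : j < s) : codeX S j ∈ S.image Prod.fst := by
  rw [codeX]
  have hlen := code_sort_len s S hcard hinj
  rw [List.getD_eq_getElem _ _ (by omega)]
  rw [← Finset.mem_sort (α := ℤ) (· ≤ ·)]
  exact List.getElem_mem _
  
lemma codeX_lt (j j' : ℕ) (hjj : j < j') (hj' : j' < s) : codeX S j < codeX S j' := by
  rw [codeX, codeX]
  have hlen := code_sort_len s S hcard hinj
  rw [List.getD_eq_getElem _ _ (by omega), List.getD_eq_getElem _ _ (by omega)]
  have hsort := Finset.sortedLT_sort (S.image Prod.fst)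
  exact hsort.getElem_lt_getElem_of_lt hjj

end SortFacts

lemma clique_code (m s : ℕ) (h : 0 < s) (hs3 : 3 ≤ s) (S : Finset (ℤ × ℤ))
    (hsub : S ⊆ gridP m) (hcard : S.card = s)
    (hclique : ∀ p ∈ S, ∀ q ∈ S, p ≠ q → onCommonLine m p q) :
    codeOf s S ∈ Codes m s s h ∧
    S = Finset.image (fun i : Fin s => ((codeOf s S i).1,
        if (i:ℕ) = 0 then (codeOf s S i).2
        else (codeOf s S ⟨0,h⟩).2
          + (codeOf s S i).2 * ((codeOf s S i).1 - (codeOf s S ⟨0,h⟩).1)))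
      Finset.univ := by
  have hinj := clique_fst_inj m S hclique
  have hY := clique_codeY m S hclique
  have hXlt := codeX_lt s S hcard hinj
  have hpt : ∀ j : ℕ, j < s → (codeX S j, codeY S (codeX S j)) ∈ S := by
    intro j hj
    obtain ⟨p, hp, hp1⟩ := Finset.mem_image.mp (codeX_mem s S hcard hinj j hj)
    have hYp : codeY S (codeX S j) = p.2 := by rw [← hp1]; exact hY p hp
    rw [hYp, ← hp1]
    simpa using hp
  have hslope2 : ∀ i j : ℕ, i < j → j < s → ∃ a : ℤ, 0 ≤ a ∧ a < (m:ℤ) ∧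
      codeY S (codeX S j) - codeY S (codeX S i) = a * (codeX S j - codeX S i) ∧
      (codeY S (codeX S j) - codeY S (codeX S i)) / (codeX S j - codeX S i) = a := by
    intro i j hij hj
    have hxne : (codeX S i, codeY S (codeX S i)).1 ≠ (codeX S j, codeY S (codeX S j)).1 := by
      simp only
      exact (hXlt i j hij hj).ne
    have hdist : (codeX S i, codeY S (codeX S i)) ≠ (codeX S j, codeY S (codeX S j)) :=
      fun hc => hxne (congrArg Prod.fst hc)
    exact slope_exact m _ _
      (hclique _ (hpt i (by omega)) _ (hpt j hj) hdist) hxne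
  have hfst : ∀ i : Fin s, (codeOf s S i).1 = codeX S (i:ℕ) := by
    intro i
    rw [codeOf]
    split_ifs with h0
    · rw [h0]
    · rfl
  have hsnd : ∀ i : Fin s, (i:ℕ) ≠ 0 → (codeOf s S i).2
      = (codeY S (codeX S (i:ℕ)) - codeY S (codeX S 0)) / (codeX S (i:ℕ) - codeX S 0) := by
    intro i h0
    rw [codeOf, if_neg h0]
  have hsnd0 : ∀ i : Fin s, (i:ℕ) = 0 → (codeOf s S i).2 = codeY S (codeX S 0) := by
    intro i h0
    rw [codeOf, if_pos h0]
  have hz : ((⟨0, h⟩ : Fin s) : ℕ) = 0 := rfl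
  -- slope value of coordinate i ≠ 0
  have hsval : ∀ i : Fin s, (i:ℕ) ≠ 0 → 0 ≤ (codeOf s S i).2 ∧ (codeOf s S i).2 < (m:ℤ) ∧
      codeY S (codeX S (i:ℕ)) - codeY S (codeX S 0)
        = (codeOf s S i).2 * (codeX S (i:ℕ) - codeX S 0) := by
    intro i h0
    obtain ⟨a, ha0, ham, haeq, hadiv⟩ := hslope2 0 (i:ℕ) (by omega) i.isLt
    rw [hsnd i h0, hadiv]
    exact ⟨ha0, ham, haeq⟩
  constructor
  · -- membership in Codes
    rw [Codes, Finset.mem_filter]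
    refine ⟨?_, ?_, ?_⟩
    · rw [Fintype.mem_piFinset]
      intro i
      by_cases h0 : (i:ℕ) = 0
      · rw [coordF, if_pos (by omega), if_pos h0]
        have hm := hsub (hpt 0 (by omega))
        rw [gridP] at hm
        have : codeOf s S i = (codeX S 0, codeY S (codeX S 0)) := by
          rw [codeOf, if_pos h0]
        rw [this]
        exact hm
      · rw [coordF, if_pos i.isLt, if_neg h0]
        rw [Finset.mem_product]
        constructor
        · rw [hfst]
          have hm := hsub (hpt (i:ℕ) i.isLt)
          rw [gridP, Finset.mem_product] at hm
          exact hm.1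
        · obtain ⟨ha0, ham, _⟩ := hsval i h0
          rw [Finset.mem_Ico]
          exact ⟨ha0, ham⟩
    · intro i j hij hjs
      rw [hfst, hfst]
      exact hXlt _ _ hij hjs
    · intro i j hij hj2 hjs
      have hi0 : (i:ℕ) ≠ 0 := by omega
      have hj0 : (j:ℕ) ≠ 0 := by omega
      obtain ⟨_, _, heqi⟩ := hsval i hi0
      obtain ⟨_, _, heqj⟩ := hsval j hj0
      obtain ⟨a', _, _, haeq', _⟩ := hslope2 (i:ℕ) (j:ℕ) (by omega) j.isLt
      rw [hfst, hfst, hfst, hz]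
      have hkey : (codeOf s S j).2 * (codeX S (j:ℕ) - codeX S 0)
          - (codeOf s S i).2 * (codeX S (i:ℕ) - codeX S 0)
          = a' * (codeX S (j:ℕ) - codeX S (i:ℕ)) := by
        rw [← heqi, ← heqj]
        linarith [haeq']
      rw [hkey]
      exact Dvd.intro_left a' rfl
  · -- reconstruction
    have hdecode : ∀ i : Fin s, ((codeOf s S i).1,
        if (i:ℕ) = 0 then (codeOf s S i).2
        else (codeOf s S ⟨0,h⟩).2
          + (codeOf s S i).2 * ((codeOf s S i).1 - (codeOf s S ⟨0,h⟩).1))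
        = (codeX S (i:ℕ), codeY S (codeX S (i:ℕ))) := by
      intro i
      by_cases h0 : (i:ℕ) = 0
      · rw [if_pos h0, hfst, hsnd0 i h0, h0]
      · rw [if_neg h0, hfst, hfst, hsnd0 ⟨0,h⟩ hz, hz]
        obtain ⟨_, _, heqi⟩ := hsval i h0
        congr 1
        linarith [heqi]
    have himg : Finset.image (fun i : Fin s => (codeX S (i:ℕ), codeY S (codeX S (i:ℕ))))
        Finset.univ = S := by
      apply Finset.eq_of_subset_of_card_le
      · intro p hp
        rw [Finset.mem_image] at hp
        obtain ⟨i, _, rfl⟩ := hp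
        exact hpt _ i.isLt
      · rw [Finset.card_image_of_injOn, Finset.card_univ, Fintype.card_fin, hcard]
        intro i _ j _ heq
        have hxeq : codeX S (i:ℕ) = codeX S (j:ℕ) := congrArg Prod.fst heq
        by_contra hne
        have hvne : (i:ℕ) ≠ (j:ℕ) := fun hc => hne (Fin.ext hc)
        rcases Nat.lt_or_ge (i:ℕ) (j:ℕ) with hlt | hge
        · exact absurd hxeq (hXlt _ _ hlt j.isLt).ne
        · have hlt : (j:ℕ) < (i:ℕ) := by omega
          exact absurd hxeq.symm (hXlt _ _ hlt i.isLt).ne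
    rw [show (fun i : Fin s => ((codeOf s S i).1,
        if (i:ℕ) = 0 then (codeOf s S i).2
        else (codeOf s S ⟨0,h⟩).2
          + (codeOf s S i).2 * ((codeOf s S i).1 - (codeOf s S ⟨0,h⟩).1)))
        = (fun i : Fin s => (codeX S (i:ℕ), codeY S (codeX S (i:ℕ)))) from funext hdecode]
    exact himg.symm


lemma clique_card_le_codes (m s : ℕ) (h : 0 < s) (hs3 : 3 ≤ s) :
    (((gridP m).powersetCard s).filter
        (fun S => ∀ p ∈ S, ∀ q ∈ S, p ≠ q → onCommonLine m p q)).card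
      ≤ (Codes m s s h).card := by
  apply Finset.card_le_card_of_injOn (fun S => codeOf s S)
  · intro S hS
    simp only [Finset.mem_coe, Finset.mem_filter, Finset.mem_powersetCard] at hS
    exact (clique_code m s h hs3 S hS.1.1 hS.1.2 hS.2).1
  · intro S1 hS1 S2 hS2 heq
    simp only [Finset.mem_coe, Finset.mem_filter, Finset.mem_powersetCard] at hS1 hS2
    have h1 := (clique_code m s h hs3 S1 hS1.1.1 hS1.1.2 hS1.2).2
    have h2 := (clique_code m s h hs3 S2 hS2.1.1 hS2.1.2 hS2.2).2
    simp only at heq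
    rw [h1, h2, heq]

theorem grid_clique_count (s : ℕ) (hs : 3 ≤ s) (ε : ℝ) (hε : 0 < ε) :
    ∃ m₀ : ℕ, ∀ m : ℕ, m₀ ≤ m →
      ((((gridP m).powersetCard s).filter
          (fun S => ∀ p ∈ S, ∀ q ∈ S, p ≠ q → onCommonLine m p q)).card : ℝ)
        ≤ (m : ℝ) ^ ((3:ℝ) + (s:ℝ) + ε) := by
  have h : 0 < s := by omega
  have hsr : (0:ℝ) < s := by exact_mod_cast h
  set ε' : ℝ := ε / s with hε'def
  have hε' : 0 < ε' := by positivity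
  obtain ⟨m₀, hm₀2, hm₀⟩ := ext_uniform ε' hε'
  refine ⟨m₀, ?_⟩
  intro m hm
  have hm2 : 2 ≤ m := le_trans hm₀2 hm
  have hmpos : (0:ℝ) < m := by
    have : (0:ℕ) < m := by omega
    exact_mod_cast this
  have hm1 : (1:ℝ) ≤ m := by
    have : (1:ℕ) ≤ m := by omega
    exact_mod_cast this
  set K : ℕ := ⌊(m:ℝ) ^ ((1:ℝ) + ε')⌋₊ with hKdef
  have hExt : ∀ x0 xp c : ℤ, 0 ≤ x0 → x0 < xp → xp < (m:ℤ) → (ExtSet m x0 xp c).card ≤ K := by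
    intro x0 xp c h0 h1 h2
    apply Nat.le_floor
    refine (ext_card_le m x0 xp c h0 h1 h2).trans ?_
    exact hm₀ m hm (xp - x0).toNat (by omega) (by omega)
  have hcount : (((gridP m).powersetCard s).filter
      (fun S => ∀ p ∈ S, ∀ q ∈ S, p ≠ q → onCommonLine m p q)).card ≤ m^5 * K^(s-2) :=
    le_trans (clique_card_le_codes m s h hs) (codes_all m s h hs K hExt)
  have hKr : (K:ℝ) ≤ (m:ℝ) ^ ((1:ℝ) + ε') := Nat.floor_le (by positivity)
  have hreal : ((((gridP m).powersetCard s).filter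
      (fun S => ∀ p ∈ S, ∀ q ∈ S, p ≠ q → onCommonLine m p q)).card : ℝ)
      ≤ (m:ℝ)^(5:ℕ) * ((m:ℝ) ^ ((1:ℝ) + ε'))^(s-2 : ℕ) := by
    calc ((((gridP m).powersetCard s).filter
        (fun S => ∀ p ∈ S, ∀ q ∈ S, p ≠ q → onCommonLine m p q)).card : ℝ)
        ≤ ((m^5 * K^(s-2) : ℕ) : ℝ) := by exact_mod_cast hcount
      _ = (m:ℝ)^(5:ℕ) * (K:ℝ)^(s-2 : ℕ) := by push_cast; ring
      _ ≤ (m:ℝ)^(5:ℕ) * ((m:ℝ) ^ ((1:ℝ) + ε'))^(s-2 : ℕ) := by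
          apply mul_le_mul_of_nonneg_left _ (by positivity)
          exact pow_le_pow_left₀ (by positivity) hKr _
  refine hreal.trans ?_
  have hs2r : ((s - 2 : ℕ) : ℝ) = (s:ℝ) - 2 := by
    have : (2:ℕ) ≤ s := by omega
    push_cast [this]
    ring
  have hcomb : (m:ℝ)^(5:ℕ) * ((m:ℝ) ^ ((1:ℝ) + ε'))^(s-2 : ℕ)
      = (m:ℝ) ^ ((5:ℝ) + (1 + ε') * ((s:ℝ) - 2)) := by
    rw [← Real.rpow_natCast ((m:ℝ) ^ ((1:ℝ) + ε')) (s-2), ← Real.rpow_mul hmpos.le,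
      ← Real.rpow_natCast (m:ℝ) 5, ← Real.rpow_add hmpos, hs2r]
    norm_num
  rw [hcomb]
  apply Real.rpow_le_rpow_of_exponent_le hm1
  have hkey : ε' * ((s:ℝ) - 2) ≤ ε := by
    rw [hε'def]
    rw [div_mul_eq_mul_div, div_le_iff₀ hsr]
    nlinarith [hsr, hε.le, (by exact_mod_cast hs : (3:ℝ) ≤ (s:ℝ))]
  nlinarith [hkey]
end
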